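/- arXiv:math/0411608 — 11 statements merged into one kernel-verified Lean document; each statement's English description precedes it below -/
import Mathlib

section
/- The operation of incrementing the smallest part by 1 is an injection from the set of Second-Kind partitions of n into the set of partitions of n+1, and its image is exactly the set of partitions of n+1 whose smallest part is at least 2. -/
open Multiset

/-- `s` is the smallest part of the partition `p`. -/
def IsSmallest {n : ℕ} (s : ℕ) (p : Nat.Partition n) : Prop :=
  s ∈ p.parts ∧ ∀ x ∈ p.parts, s ≤ x

/-- A partition is of the "Second Kind" if it has exactly one part or its smallest part is
strictly less than every other part, i.e. its smallest part occurs exactly once. -/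
def SecondKind {n : ℕ} (p : Nat.Partition n) : Prop :=
  ∃ s, IsSmallest s p ∧ p.parts.count s = 1

/-- Second kind for the second method: the number ℵ of unit parts satisfies
`1 ≤ ℵ < m` where `m` is the smallest part greater than 1. -/
def SecondKind2 {n : ℕ} (p : Nat.Partition n) : Prop :=
  ∃ m ∈ p.parts, 1 < m ∧ (∀ x ∈ p.parts, 1 < x → m ≤ x) ∧
    1 ≤ p.parts.count 1 ∧ p.parts.count 1 < m

/-- A partition is of the "First Kind" if it has at least two parts and its two smallest
parts are equal, i.e. its smallest part occurs at least twice. -/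
def FirstKind {n : ℕ} (p : Nat.Partition n) : Prop :=
  ∃ s, IsSmallest s p ∧ 2 ≤ p.parts.count s

/-!
If `s` is the smallest part of `p` and occurs only once, then every part of
`(s + 1) ::ₘ p.parts.erase s` is at least `s + 1`, and `s + 1` is one of them; so `s + 1` is the
smallest part of the image, which determines `s` and then `p`. Conversely, if the smallest part
`s + 1` of a partition of `n + 1` is at least `2`, lowering one copy of it to `s` gives a partition
of `n` whose smallest part `s` occurs once, and incrementing `s` undoes this.
-/

namespace Multiset

theorem lt_of_mem_erase_of_count_le_one {α : Type*} [LinearOrder α] {m : Multiset α} {s x : α}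
    (hmin : ∀ y ∈ m, s ≤ y) (hcount : m.count s ≤ 1) (hx : x ∈ m.erase s) : s < x := by
  refine (hmin x (mem_of_mem_erase hx)).lt_of_ne ?_
  rintro rfl
  have := count_pos.2 hx
  rw [count_erase_self] at this
  omega

theorem succ_le_of_mem_cons_succ_erase {m : Multiset ℕ} {s x : ℕ}
    (hs_lt : ∀ y ∈ m.erase s, s < y) (hx : x ∈ (s + 1) ::ₘ m.erase s) : s + 1 ≤ x := by
  rcases mem_cons.1 hx with rfl | hx
  exacts [le_rfl, hs_lt x hx]

theorem eq_of_cons_succ_erase_eq {m m' : Multiset ℕ} {s t : ℕ} (hs : s ∈ m) (ht : t ∈ m')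
    (hs_lt : ∀ y ∈ m.erase s, s < y) (ht_lt : ∀ y ∈ m'.erase t, t < y)
    (h : (s + 1) ::ₘ m.erase s = (t + 1) ::ₘ m'.erase t) : m = m' := by
  have hst : s + 1 = t + 1 :=
    le_antisymm (succ_le_of_mem_cons_succ_erase hs_lt (h ▸ mem_cons_self _ _))
      (succ_le_of_mem_cons_succ_erase ht_lt (h ▸ mem_cons_self _ _))
  obtain rfl := Nat.succ_inj.1 hst
  rw [← cons_erase hs, ← cons_erase ht, (cons_inj_right _).1 h]

end Multiset

namespace Nat.Partition

theorem exists_isSmallest {n : ℕ} (p : n.Partition) (hn : n ≠ 0) : ∃ s, IsSmallest s p := by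
  have hne : p.parts ≠ 0 := by
    rintro h
    exact hn (by rw [← p.parts_sum, h, sum_zero])
  obtain ⟨s, hs, hmin⟩ := exists_min_image id hne
  exact ⟨s, hs, hmin⟩

def incrPart {n : ℕ} (p : n.Partition) {s : ℕ} (hs : s ∈ p.parts) : (n + 1).Partition where
  parts := (s + 1) ::ₘ p.parts.erase s
  parts_pos hi := by
    rcases mem_cons.1 hi with rfl | hi
    exacts [s.succ_pos, p.parts_pos (mem_of_mem_erase hi)]
  parts_sum := by rw [sum_cons, add_right_comm, sum_erase hs, p.parts_sum]

def decrPart {n : ℕ} (α : (n + 1).Partition) {s : ℕ} (hs : s + 1 ∈ α.parts) (hs0 : 0 < s) :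
    n.Partition where
  parts := s ::ₘ α.parts.erase (s + 1)
  parts_pos hi := by
    rcases mem_cons.1 hi with rfl | hi
    exacts [hs0, α.parts_pos (mem_of_mem_erase hi)]
  parts_sum := by
    have := sum_erase hs
    rw [α.parts_sum] at this
    rw [sum_cons]
    omega

variable {n s : ℕ} {α : (n + 1).Partition} (hs : s + 1 ∈ α.parts) (hs0 : 0 < s)

theorem parts_eq_cons_succ_erase_decrPart :
    α.parts = (s + 1) ::ₘ (α.decrPart hs hs0).parts.erase s := by
  rw [decrPart, erase_cons_head, cons_erase hs]

theorem count_self_decrPart : (α.decrPart hs hs0).parts.count s = α.parts.count s + 1 := by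
  rw [decrPart, count_cons_self, count_erase_of_ne s.succ_ne_self.symm]

theorem isSmallest_decrPart (hmin : ∀ y ∈ α.parts, s ≤ y) : IsSmallest s (α.decrPart hs hs0) := by
  refine ⟨mem_cons_self _ _, fun y hy => ?_⟩
  rcases mem_cons.1 hy with rfl | hy
  exacts [le_rfl, hmin y (mem_of_mem_erase hy)]

theorem secondKind_decrPart (hmin : ∀ y ∈ α.parts, s + 1 ≤ y) : SecondKind (α.decrPart hs hs0) := by
  have hs_not_mem : s ∉ α.parts := fun h => by have := hmin s h; omega
  refine ⟨s, isSmallest_decrPart hs hs0 fun y hy => Nat.le_of_succ_le (hmin y hy), ?_⟩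
  rw [count_self_decrPart, count_eq_zero.2 hs_not_mem]

end Nat.Partition

theorem IsSmallest.unique {n s t : ℕ} {p : n.Partition} (hs : IsSmallest s p)
    (ht : IsSmallest t p) : s = t :=
  le_antisymm (hs.2 t ht.1) (ht.2 s hs.1)

theorem SecondKind.lt_of_mem_erase {n s x : ℕ} {p : n.Partition} (hp : SecondKind p)
    (hs : IsSmallest s p) (hx : x ∈ p.parts.erase s) : s < x := by
  obtain ⟨t, ht, hcount⟩ := hp
  obtain rfl := hs.unique ht
  exact lt_of_mem_erase_of_count_le_one hs.2 hcount.le hx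

/-- Incrementing the smallest part by 1 maps Second-Kind partitions of `n` injectively
into partitions of `n+1`, with image exactly the partitions of `n+1` whose smallest part
is at least 2 (equivalently, all parts are at least 2). -/
theorem stmt3 (n : ℕ) :
    (∀ p : Nat.Partition n, SecondKind p → ∀ s, IsSmallest s p →
        ∃ α : Nat.Partition (n + 1), α.parts = (s + 1) ::ₘ p.parts.erase s) ∧
    (∀ p q : Nat.Partition n, SecondKind p → SecondKind q →
        ∀ s t, IsSmallest s p → IsSmallest t q →
        (s + 1) ::ₘ p.parts.erase s = (t + 1) ::ₘ q.parts.erase t → p = q) ∧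
    (∀ α : Nat.Partition (n + 1),
        (∀ x ∈ α.parts, 2 ≤ x) ↔
          ∃ p : Nat.Partition n, SecondKind p ∧ ∃ s, IsSmallest s p ∧
            α.parts = (s + 1) ::ₘ p.parts.erase s) := by
  refine ⟨fun p _ s hs => ⟨p.incrPart hs.1, rfl⟩, ?_, fun α => ⟨?_, ?_⟩⟩
  · intro p q hp hq s t hs ht h
    exact Nat.Partition.ext <|
      eq_of_cons_succ_erase_eq hs.1 ht.1 (fun _ => hp.lt_of_mem_erase hs)
        (fun _ => hq.lt_of_mem_erase ht) h
  · intro hall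
    obtain ⟨a, ha, hmin⟩ := α.exists_isSmallest n.succ_ne_zero
    obtain ⟨s, rfl⟩ : ∃ s, a = s + 1 := Nat.exists_eq_succ_of_ne_zero (α.parts_pos ha).ne'
    have hs0 : 0 < s := by have := hall _ ha; omega
    exact ⟨α.decrPart ha hs0, Nat.Partition.secondKind_decrPart ha hs0 hmin, s,
      Nat.Partition.isSmallest_decrPart ha hs0 fun y hy => Nat.le_of_succ_le (hmin y hy),
      Nat.Partition.parts_eq_cons_succ_erase_decrPart ha hs0⟩
  · rintro ⟨p, hp, s, hs, hα⟩ x hx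
    have hs_pos := p.parts_pos hs.1
    have := succ_le_of_mem_cons_succ_erase (fun _ => hp.lt_of_mem_erase hs) (hα ▸ hx)
    omega
end

section
/- The number of partitions of n whose smallest part is strictly less than all other parts (i.e., of the Second Kind) equals the number of partitions of n+1 all of whose parts are at least 2. -/
open Multiset

namespace Stmt5Aux

/-- Canonical smallest part of a partition. -/
noncomputable def small {n : ℕ} (p : Nat.Partition n) : ℕ :=
  sInf {x | x ∈ p.parts}

lemma small_eq {n : ℕ} {p : Nat.Partition n} {s : ℕ} (h : IsSmallest s p) :
    small p = s := by
  apply le_antisymm (Nat.sInf_le h.1)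
  exact le_csInf ⟨s, h.1⟩ fun x hx => h.2 x hx

lemma small_mem {n : ℕ} {p : Nat.Partition n} (h : p.parts ≠ 0) :
    small p ∈ p.parts := by
  have : {x | x ∈ p.parts}.Nonempty := by
    obtain ⟨a, ha⟩ := Multiset.exists_mem_of_ne_zero h
    exact ⟨a, ha⟩
  exact Nat.sInf_mem this

lemma small_le {n : ℕ} {p : Nat.Partition n} {x : ℕ} (hx : x ∈ p.parts) :
    small p ≤ x := Nat.sInf_le hx

lemma sk_small {n : ℕ} {p : Nat.Partition n} (hp : SecondKind p) :
    small p ∈ p.parts ∧ (∀ x ∈ p.parts, small p ≤ x) ∧ p.parts.count (small p) = 1 := by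
  obtain ⟨s, hs, hc⟩ := hp
  rw [small_eq hs]
  exact ⟨hs.1, hs.2, hc⟩

lemma small_notmem_erase {n : ℕ} {p : Nat.Partition n} (hp : SecondKind p) :
    small p ∉ p.parts.erase (small p) := by
  have hc := (sk_small hp).2.2
  intro h
  have h0 : (p.parts.erase (small p)).count (small p) = p.parts.count (small p) - 1 :=
    Multiset.count_erase_self _ _
  rw [hc] at h0
  simp only [Nat.sub_self] at h0
  exact (Multiset.count_eq_zero.1 h0) h

lemma sum_eq {n : ℕ} {p : Nat.Partition n} (h : small p ∈ p.parts) :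
    small p + (p.parts.erase (small p)).sum = n := by
  have h1 : small p ::ₘ p.parts.erase (small p) = p.parts := Multiset.cons_erase h
  have h2 := congrArg Multiset.sum h1
  rw [Multiset.sum_cons, p.parts_sum] at h2
  exact h2

/-- Forward map on a second-kind partition: add 1 to the smallest part. -/
noncomputable def fwd {n : ℕ} (p : {p : Nat.Partition n // SecondKind p}) :
    {q : Nat.Partition (n + 1) // ∀ x ∈ q.parts, 2 ≤ x} :=
  ⟨{ parts := (small p.1 + 1) ::ₘ p.1.parts.erase (small p.1)
     parts_pos := by
       intro x hx
       rcases Multiset.mem_cons.1 hx with h | h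
       · omega
       · exact p.1.parts_pos (Multiset.mem_of_mem_erase h)
     parts_sum := by
       have := sum_eq (sk_small p.2).1
       simp only [Multiset.sum_cons]
       omega },
   by
     intro x hx
     rcases Multiset.mem_cons.1 hx with h | h
     · have : 0 < small p.1 := p.1.parts_pos (sk_small p.2).1
       omega
     · have hxp : x ∈ p.1.parts := Multiset.mem_of_mem_erase h
       have hxs : x ≠ small p.1 := fun he => small_notmem_erase p.2 (he ▸ h)
       have hle : small p.1 ≤ x := (sk_small p.2).2.1 x hxp
       have : 0 < small p.1 := p.1.parts_pos (sk_small p.2).1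
       omega⟩

lemma parts_ne_zero {n : ℕ} (q : Nat.Partition (n + 1)) : q.parts ≠ 0 := by
  intro h
  have := q.parts_sum
  rw [h] at this
  simp at this

/-- Backward map: subtract 1 from the smallest part. -/
noncomputable def bwd {n : ℕ} (q : {q : Nat.Partition (n + 1) // ∀ x ∈ q.parts, 2 ≤ x}) :
    {p : Nat.Partition n // SecondKind p} :=
  ⟨{ parts := (small q.1 - 1) ::ₘ q.1.parts.erase (small q.1)
     parts_pos := by
       intro x hx
       rcases Multiset.mem_cons.1 hx with h | h
       · have := q.2 _ (small_mem (parts_ne_zero q.1))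
         omega
       · exact q.1.parts_pos (Multiset.mem_of_mem_erase h)
     parts_sum := by
       have := sum_eq (small_mem (parts_ne_zero q.1))
       have h2 : 2 ≤ small q.1 := q.2 _ (small_mem (parts_ne_zero q.1))
       simp only [Multiset.sum_cons]
       omega },
   by
     have hmem := small_mem (parts_ne_zero q.1)
     have hm2 : 2 ≤ small q.1 := q.2 _ hmem
     refine ⟨small q.1 - 1, ⟨Multiset.mem_cons_self _ _, ?_⟩, ?_⟩
     · intro x hx
       rcases Multiset.mem_cons.1 hx with h | h
       · omega
       · have := small_le (Multiset.mem_of_mem_erase h)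
         omega
     · rw [Multiset.count_cons_self]
       have h0 : (q.1.parts.erase (small q.1)).count (small q.1 - 1) = 0 := by
         rw [Multiset.count_eq_zero]
         intro h
         have hxq := Multiset.mem_of_mem_erase h
         have := q.2 _ hxq
         have := small_le hxq
         omega
       omega⟩

lemma fwd_parts {n : ℕ} (p : {p : Nat.Partition n // SecondKind p}) :
    (fwd p).1.parts = (small p.1 + 1) ::ₘ p.1.parts.erase (small p.1) := rfl

lemma bwd_parts {n : ℕ} (q : {q : Nat.Partition (n + 1) // ∀ x ∈ q.parts, 2 ≤ x}) :
    (bwd q).1.parts = (small q.1 - 1) ::ₘ q.1.parts.erase (small q.1) := rfl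

lemma left_inv {n : ℕ} (p : {p : Nat.Partition n // SecondKind p}) : bwd (fwd p) = p := by
  have hmem := (sk_small p.2).1
  have hnotmem := small_notmem_erase p.2
  have hsm : small (fwd p).1 = small p.1 + 1 := by
    apply small_eq
    refine ⟨?_, ?_⟩
    · rw [fwd_parts]; exact Multiset.mem_cons_self _ _
    · intro x hx
      rw [fwd_parts] at hx
      rcases Multiset.mem_cons.1 hx with h | h
      · omega
      · have hxp : x ∈ p.1.parts := Multiset.mem_of_mem_erase h
        have hle : small p.1 ≤ x := small_le hxp
        have hne : x ≠ small p.1 := fun he => hnotmem (he ▸ h)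
        omega
  apply Subtype.ext
  apply Nat.Partition.ext
  rw [bwd_parts, hsm, fwd_parts, Nat.add_sub_cancel, Multiset.erase_cons_head]
  exact Multiset.cons_erase hmem

lemma right_inv {n : ℕ} (q : {q : Nat.Partition (n + 1) // ∀ x ∈ q.parts, 2 ≤ x}) :
    fwd (bwd q) = q := by
  have hmem := small_mem (parts_ne_zero q.1)
  have hm2 : 2 ≤ small q.1 := q.2 _ hmem
  have hsm : small (bwd q).1 = small q.1 - 1 := by
    apply small_eq
    refine ⟨?_, ?_⟩
    · rw [bwd_parts]; exact Multiset.mem_cons_self _ _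
    · intro x hx
      rw [bwd_parts] at hx
      rcases Multiset.mem_cons.1 hx with h | h
      · omega
      · have := small_le (Multiset.mem_of_mem_erase h)
        omega
  apply Subtype.ext
  apply Nat.Partition.ext
  rw [fwd_parts, hsm, bwd_parts, Multiset.erase_cons_head]
  have h1 : small q.1 - 1 + 1 = small q.1 := by omega
  rw [h1]
  exact Multiset.cons_erase hmem

end Stmt5Aux

/-- The number of Second-Kind partitions of `n` equals the number of partitions of `n+1`
all of whose parts are at least 2. -/
theorem stmt5 (n : ℕ) :
    Nat.card {p : Nat.Partition n // SecondKind p} =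
      Nat.card {q : Nat.Partition (n + 1) // ∀ x ∈ q.parts, 2 ≤ x} := by
  exact Nat.card_congr ⟨Stmt5Aux.fwd, Stmt5Aux.bwd, Stmt5Aux.left_inv, Stmt5Aux.right_inv⟩
end

section
/- Q(n) = P(n+1) − P(n) for n ≥ 1, where Q(n) counts partitions of n with smallest part strictly less than every other part (including partitions with a single part). -/
open Multiset

lemma isSmallest_unique {n : ℕ} {s t : ℕ} {p : Nat.Partition n}
    (hs : IsSmallest s p) (ht : IsSmallest t p) : s = t :=
  le_antisymm (hs.2 t ht.1) (ht.2 s hs.1)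

lemma exists_isSmallest {n : ℕ} (p : Nat.Partition n) (h : p.parts ≠ 0) :
    ∃ s, IsSmallest s p := by
  have hne : p.parts.toFinset.Nonempty := by
    rw [Finset.nonempty_iff_ne_empty]
    simpa [Multiset.toFinset_eq_empty] using h
  refine ⟨p.parts.toFinset.min' hne, ?_, fun x hx => ?_⟩
  · have := p.parts.toFinset.min'_mem hne
    simpa using this
  · exact Finset.min'_le _ _ (by simpa using hx)

lemma parts_ne_zero {n : ℕ} (p : Nat.Partition n) (hn : 1 ≤ n) : p.parts ≠ 0 := by
  intro h
  have := p.parts_sum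
  rw [h] at this
  simp at this
  omega

/-- partitions of n+1 containing a part 1 correspond to partitions of n -/
noncomputable def equivOne (n : ℕ) :
    Nat.Partition n ≃ {q : Nat.Partition (n + 1) // 1 ∈ q.parts} where
  toFun p := ⟨⟨1 ::ₘ p.parts, by
      intro i hi
      rcases Multiset.mem_cons.1 hi with h | h
      · omega
      · exact p.parts_pos h, by simp [p.parts_sum]; omega⟩, Multiset.mem_cons_self _ _⟩
  invFun q := ⟨(q.1.parts.erase 1), by
      intro i hi
      exact q.1.parts_pos (Multiset.mem_of_mem_erase hi), by
      have h := Multiset.cons_erase q.2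
      have := q.1.parts_sum
      rw [← h, Multiset.sum_cons] at this
      omega⟩
  left_inv p := by
    ext1
    simp [Multiset.erase_cons_head]
  right_inv q := by
    ext1
    ext1
    simp [Multiset.cons_erase q.2]

noncomputable def small {n : ℕ} (p : Nat.Partition n) : ℕ :=
  if h : p.parts ≠ 0 then (exists_isSmallest p h).choose else 0

lemma small_spec {n : ℕ} (p : Nat.Partition n) (h : p.parts ≠ 0) :
    IsSmallest (small p) p := by
  rw [small, dif_pos h]
  exact (exists_isSmallest p h).choose_spec

lemma small_eq {n : ℕ} {p : Nat.Partition n} {s : ℕ} (hs : IsSmallest s p) :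
    small p = s :=
  isSmallest_unique (small_spec p (fun h0 => by
    have := hs.1; rw [h0] at this; simp at this)) hs

/-- second-kind partitions of n correspond to partitions of n+1 with no part 1 -/
noncomputable def equivSecond (n : ℕ) (hn : 1 ≤ n) :
    {p : Nat.Partition n // SecondKind p} ≃ {q : Nat.Partition (n + 1) // 1 ∉ q.parts} where
  toFun p :=
    ⟨⟨(small p.1 + 1) ::ₘ p.1.parts.erase (small p.1), by
      obtain ⟨s, hs, hcount⟩ := p.2
      rw [small_eq hs]
      intro i hi
      rcases Multiset.mem_cons.1 hi with h | h
      · omega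
      · exact p.1.parts_pos (Multiset.mem_of_mem_erase h), by
      obtain ⟨s, hs, hcount⟩ := p.2
      rw [small_eq hs]
      have h := Multiset.cons_erase hs.1
      have hsum := p.1.parts_sum
      rw [← h, Multiset.sum_cons] at hsum
      rw [Multiset.sum_cons]
      omega⟩, by
      obtain ⟨s, hs, hcount⟩ := p.2
      show (1 : ℕ) ∉ (small p.1 + 1) ::ₘ p.1.parts.erase (small p.1)
      rw [small_eq hs]
      intro h1
      have hspos : 0 < s := p.1.parts_pos hs.1
      rcases Multiset.mem_cons.1 h1 with h | h
      · omega
      · have h1mem : (1 : ℕ) ∈ p.1.parts := Multiset.mem_of_mem_erase h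
        have : s ≤ 1 := hs.2 1 h1mem
        have hs1 : s = 1 := by omega
        subst hs1
        have : Multiset.count 1 (p.1.parts.erase 1) = 0 := by
          rw [Multiset.count_erase_self, hcount]
        exact absurd (Multiset.count_pos.2 h) (by omega)⟩
  invFun q :=
    ⟨⟨(small q.1 - 1) ::ₘ q.1.parts.erase (small q.1), by
      have hm := small_spec q.1 (parts_ne_zero q.1 (by omega))
      have hm2 : 2 ≤ small q.1 := by
        have := q.1.parts_pos hm.1
        have hne : small q.1 ≠ 1 := by intro h; exact q.2 (by simpa only [h] using hm.1)
        omega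
      intro i hi
      rcases Multiset.mem_cons.1 hi with h | h
      · omega
      · exact q.1.parts_pos (Multiset.mem_of_mem_erase h), by
      have hm := small_spec q.1 (parts_ne_zero q.1 (by omega))
      have hm2 : 2 ≤ small q.1 := by
        have := q.1.parts_pos hm.1
        have hne : small q.1 ≠ 1 := by intro h; exact q.2 (by simpa only [h] using hm.1)
        omega
      have h := Multiset.cons_erase hm.1
      have hsum := q.1.parts_sum
      rw [← h, Multiset.sum_cons] at hsum
      rw [Multiset.sum_cons]
      omega⟩, by
      have hm := small_spec q.1 (parts_ne_zero q.1 (by omega))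
      have hm2 : 2 ≤ small q.1 := by
        have := q.1.parts_pos hm.1
        have hne : small q.1 ≠ 1 := by intro h; exact q.2 (by simpa only [h] using hm.1)
        omega
      set m := small q.1 with hmdef
      refine ⟨m - 1, ⟨Multiset.mem_cons_self _ _, fun x hx => ?_⟩, ?_⟩
      · rcases Multiset.mem_cons.1 hx with h | h
        · omega
        · have := hm.2 x (Multiset.mem_of_mem_erase h)
          omega
      · rw [Multiset.count_cons_self]
        have : m - 1 ∉ q.1.parts.erase m := by
          intro h
          have := hm.2 (m - 1) (Multiset.mem_of_mem_erase h)
          omega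
        rw [Multiset.count_eq_zero_of_notMem this]⟩
  left_inv p := by
    obtain ⟨s, hs, hcount⟩ := p.2
    have hse : small p.1 = s := small_eq hs
    ext1
    ext1
    have hQ : ∀ (Q : Nat.Partition (n + 1)), Q.parts = (s + 1) ::ₘ p.1.parts.erase s →
        (small Q - 1) ::ₘ Q.parts.erase (small Q) = p.1.parts := by
      intro Q hQp
      have hsm : IsSmallest (s + 1) Q := by
        constructor
        · rw [hQp]; exact Multiset.mem_cons_self _ _
        · intro x hx
          rw [hQp] at hx
          rcases Multiset.mem_cons.1 hx with h | h
          · omega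
          · have hxmem := Multiset.mem_of_mem_erase h
            have h1 : s ≤ x := hs.2 x hxmem
            have hxne : x ≠ s := by
              intro hxs
              subst hxs
              have : Multiset.count x (p.1.parts.erase x) = 0 := by
                rw [Multiset.count_erase_self, hcount]
              exact absurd (Multiset.count_pos.2 h) (by omega)
            omega
      rw [small_eq hsm, hQp, Multiset.erase_cons_head, Nat.add_sub_cancel,
        Multiset.cons_erase hs.1]
    exact hQ _ (by show (small p.1 + 1) ::ₘ _ = _; rw [hse])
  right_inv q := by
    have hm := small_spec q.1 (parts_ne_zero q.1 (by omega))
    have hm2 : 2 ≤ small q.1 := by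
      have := q.1.parts_pos hm.1
      have hne : small q.1 ≠ 1 := by intro h; exact q.2 (by simpa only [h] using hm.1)
      omega
    ext1
    ext1
    have hQ : ∀ (P : Nat.Partition n),
        P.parts = (small q.1 - 1) ::ₘ q.1.parts.erase (small q.1) →
        (small P + 1) ::ₘ P.parts.erase (small P) = q.1.parts := by
      intro P hP
      have hsm : IsSmallest (small q.1 - 1) P := by
        constructor
        · rw [hP]; exact Multiset.mem_cons_self _ _
        · intro x hx
          rw [hP] at hx
          rcases Multiset.mem_cons.1 hx with h | h
          · omega
          · have := hm.2 x (Multiset.mem_of_mem_erase h)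
            omega
      rw [small_eq hsm, hP, Multiset.erase_cons_head]
      have h1 : small q.1 - 1 + 1 = small q.1 := by omega
      rw [h1]
      exact Multiset.cons_erase hm.1
    exact hQ _ rfl

/-- `Q(n) = P(n+1) - P(n)` for `n ≥ 1`. -/
theorem stmt6 (n : ℕ) (hn : 1 ≤ n) :
    Nat.card {p : Nat.Partition n // SecondKind p} =
      Nat.card (Nat.Partition (n + 1)) - Nat.card (Nat.Partition n) := by
  classical
  have h1 : Nat.card (Nat.Partition n)
      = Nat.card {q : Nat.Partition (n + 1) // 1 ∈ q.parts} := Nat.card_congr (equivOne n)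
  have h2 : Nat.card {p : Nat.Partition n // SecondKind p}
      = Nat.card {q : Nat.Partition (n + 1) // 1 ∉ q.parts} :=
    Nat.card_congr (equivSecond n hn)
  have h3 : Nat.card (Nat.Partition (n + 1))
      = Nat.card {q : Nat.Partition (n + 1) // 1 ∈ q.parts}
        + Nat.card {q : Nat.Partition (n + 1) // 1 ∉ q.parts} := by
    rw [← Nat.card_sum]
    exact Nat.card_congr (Equiv.sumCompl _).symm
  omega
end

section
/- The formal power series identity Σ_{n≥1} Q(n) q^n = Σ_{s≥1} q^s Π_{j≥s+1} 1/(1−q^j) holds, where Q(n) is the number of partitions of n whose smallest part occurs exactly once. -/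
open Multiset

/-!
Removing the smallest part `s` of a partition of `n` in which it occurs once leaves a partition
of `n - s` into parts `> s`, and prepending `s` inverts this; since every part of a partition of
`n - s` is at most `n`, such partitions are counted by the coefficient of `q^(n - s)` in
`∏_{s < j ≤ n} (1 - q^j)⁻¹`, by the product formula for partitions with restricted parts.
-/

open PowerSeries Finset
open scoped PowerSeries.WithPiTopology

theorem Multiset.cons_eq_cons_iff_of_forall_lt {α : Type*} [LinearOrder α] {a b : α}
    {s t : Multiset α} (hs : ∀ x ∈ s, a < x) (ht : ∀ x ∈ t, b < x) :
    a ::ₘ s = b ::ₘ t ↔ a = b ∧ s = t := by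
  refine ⟨fun h ↦ ?_, fun ⟨hab, hst⟩ ↦ hab ▸ hst ▸ rfl⟩
  have hab : a = b := by
    rcases mem_cons.1 (h ▸ mem_cons_self a s) with hab | ha
    · exact hab
    rcases mem_cons.1 (h.symm ▸ mem_cons_self b t) with hba | hb
    · exact hba.symm
    exact absurd (hs b hb) (ht a ha).not_gt
  subst hab
  exact ⟨rfl, (cons_inj_right a).1 h⟩

namespace Nat.Partition

theorem powerSeriesMk_card_restricted_mem_eq_prod {K : Type*} [Field K] (S : Finset ℕ)
    (hS : 0 ∉ S) :
    PowerSeries.mk (fun n ↦ (#(restricted n (· ∈ S)) : K)) = ∏ j ∈ S, (1 - X ^ j)⁻¹ := by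
  -- Mathlib's product formula is a `HasProd` statement; any T2 topology on `K` turns it into
  -- an equality, and the discrete one is the simplest.
  let _ : TopologicalSpace K := ⊥
  have _ : DiscreteTopology K := ⟨rfl⟩
  have geom (j : ℕ) (hj : j ≠ 0) : ∑' k, (X : K⟦X⟧) ^ (j * k) = (1 - X ^ j)⁻¹ := by
    rw [PowerSeries.eq_inv_iff_mul_eq_one (by simp [hj])]
    simp_rw [pow_mul]
    exact WithPiTopology.tsum_pow_mul_one_sub_of_constantCoeff_eq_zero (by simp [hj])
  have hprod : HasProd (fun j ↦ if j ∈ S then (1 - X ^ j)⁻¹ else 1)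
      (∏ j ∈ S, (1 - (X : K⟦X⟧) ^ j)⁻¹) := by
    simpa using hasProd_prod_of_ne_finset_one (s := S)
      (f := fun j ↦ if j ∈ S then (1 - (X : K⟦X⟧) ^ j)⁻¹ else 1) (fun j hj ↦ if_neg hj)
  refine (hasProd_powerSeriesMk_card_restricted K (· ∈ S)).unique ?_
  rw [← (add_left_injective 1).hasProd_iff] at hprod
  · convert hprod using 1
    · rfl
    · ext1 i
      simp only [Function.comp_apply, geom (i + 1) i.succ_ne_zero]
  · rintro (_ | j) hj
    · exact if_neg hS
    · exact absurd ⟨j, rfl⟩ hj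

theorem restricted_congr {n : ℕ} {p q : ℕ → Prop} [DecidablePred p] [DecidablePred q]
    (h : ∀ i, 0 < i → i ≤ n → (p i ↔ q i)) : restricted n p = restricted n q :=
  filter_congr fun x _ ↦ forall₂_congr fun i hi ↦ h i (x.parts_pos hi) (le_of_mem_parts hi)

def cons {n s : ℕ} (q : (n - s).Partition) (hs : 0 < s) (hsn : s ≤ n) : n.Partition where
  parts := s ::ₘ q.parts
  parts_pos hi := (Multiset.mem_cons.1 hi).elim (· ▸ hs) q.parts_pos
  parts_sum := by rw [Multiset.sum_cons, q.parts_sum]; omega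

end Nat.Partition

open Nat.Partition

theorem secondKind_cons {n s : ℕ} {q : (n - s).Partition} (hs : 0 < s) (hsn : s ≤ n)
    (hq : ∀ x ∈ q.parts, s < x) : SecondKind (q.cons hs hsn) := by
  refine ⟨s, ⟨Multiset.mem_cons_self s _, fun x hx ↦ ?_⟩, ?_⟩
  · exact (Multiset.mem_cons.1 hx).elim ge_of_eq fun hx ↦ (hq x hx).le
  · have : s ∉ q.parts := fun h ↦ (hq s h).false
    simp [Nat.Partition.cons, Multiset.count_eq_zero.2 this]

theorem SecondKind.exists_eq_cons {n : ℕ} {p : n.Partition} (h : SecondKind p) :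
    ∃ s, ∃ (hs : 0 < s) (hsn : s ≤ n) (q : (n - s).Partition),
      (∀ x ∈ q.parts, s < x) ∧ p = q.cons hs hsn := by
  obtain ⟨s, ⟨hsp, hmin⟩, hcount⟩ := h
  have hsn := le_of_mem_parts hsp
  have hsum : (p.parts.erase s).sum = n - s := by
    have h := congrArg Multiset.sum (Multiset.cons_erase hsp)
    rw [Multiset.sum_cons, p.parts_sum] at h
    omega
  let q : (n - s).Partition :=
    ⟨p.parts.erase s, fun hi ↦ p.parts_pos (Multiset.mem_of_mem_erase hi), hsum⟩
  refine ⟨s, p.parts_pos hsp, hsn, q, fun x hx ↦ ?_, Nat.Partition.ext ?_⟩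
  · have hxs : x ≠ s := by
      rintro rfl
      rw [← Multiset.count_pos, Multiset.count_erase_self, hcount] at hx
      exact hx.false
    exact (hmin x (Multiset.mem_of_mem_erase hx)).lt_of_ne' hxs
  · exact (Multiset.cons_erase hsp).symm

theorem card_secondKind (n : ℕ) :
    Nat.card {p : n.Partition // SecondKind p} =
      ∑ s ∈ Icc 1 n, #(restricted (n - s) (s < ·)) := by
  classical
  rw [Nat.card_eq_fintype_card, Fintype.card_subtype, ← Finset.card_sigma]
  symm
  refine card_bij (fun a ha ↦ a.2.cons (Finset.mem_Icc.1 (Finset.mem_sigma.1 ha).1).1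
    (Finset.mem_Icc.1 (Finset.mem_sigma.1 ha).1).2) ?_ ?_ ?_
  · rintro ⟨s, q⟩ hsq
    simp only [Finset.mem_sigma, restricted, Finset.mem_filter] at hsq
    exact Finset.mem_filter.2 ⟨Finset.mem_univ _, secondKind_cons _ _ hsq.2.2⟩
  · rintro ⟨s, q⟩ hsq ⟨t, r⟩ htr h
    simp only [Finset.mem_sigma, restricted, Finset.mem_filter] at hsq htr
    obtain ⟨rfl, hqr⟩ :=
      (Multiset.cons_eq_cons_iff_of_forall_lt hsq.2.2 htr.2.2).1 (congrArg parts h)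
    exact Sigma.ext rfl (heq_of_eq (Nat.Partition.ext hqr))
  · intro p hp
    obtain ⟨s, hs, hsn, q, hq, rfl⟩ := (Finset.mem_filter.1 hp).2.exists_eq_cons
    refine ⟨⟨s, q⟩, ?_, rfl⟩
    simpa [restricted] using ⟨⟨hs, hsn⟩, hq⟩

theorem stmt9_general (n : ℕ) :
    (Nat.card {p : Nat.Partition n // SecondKind p} : ℚ) =
      PowerSeries.coeff (R := ℚ) n
        (∑ s ∈ Finset.Icc 1 n, (PowerSeries.X : PowerSeries ℚ) ^ s *
          ∏ j ∈ Finset.Icc (s + 1) n, (1 - (PowerSeries.X : PowerSeries ℚ) ^ j)⁻¹) := by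
  rw [card_secondKind, map_sum, Nat.cast_sum]
  refine Finset.sum_congr rfl fun s hs ↦ ?_
  have hsn : s ≤ n := (Finset.mem_Icc.1 hs).2
  have hparts : restricted (n - s) (s < ·) = restricted (n - s) (· ∈ Finset.Icc (s + 1) n) :=
    restricted_congr fun i _ hi ↦ by simp only [Finset.mem_Icc]; omega
  rw [coeff_X_pow_mul', if_pos hsn, ← powerSeriesMk_card_restricted_mem_eq_prod _ (by simp),
    coeff_mk, hparts]

/-- The generating-function identity `Σ_{n≥1} Q(n) q^n = Σ_{s≥1} q^s Π_{j≥s+1} 1/(1-q^j)`,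
stated coefficient-wise: for each `n ≥ 1`, `Q(n)` is the `n`-th coefficient of the
right-hand side (truncating the sum at `s = n` and the product at `j = n`, which does not
affect the coefficient of `q^n`). -/
theorem stmt9 (n : ℕ) (hn : 1 ≤ n) :
    (Nat.card {p : Nat.Partition n // SecondKind p} : ℚ) =
      PowerSeries.coeff (R := ℚ) n
        (∑ s ∈ Finset.Icc 1 n, (PowerSeries.X : PowerSeries ℚ) ^ s *
          ∏ j ∈ Finset.Icc (s + 1) n, (1 - (PowerSeries.X : PowerSeries ℚ) ^ j)⁻¹) :=
  stmt9_general n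
end

section
/- For every partition α of n+1 with more than one part, there is a unique partition β of n such that α arises from β by the second method: either adjoining a part equal to 1 to β, or, when β contains ℵ parts equal to 1 with 1 ≤ ℵ, replacing all ℵ unit parts of β by the single part ℵ+1 — the latter operation being applied only to Second-Kind partitions (those with 1 ≤ ℵ < smallest non-unit part). -/
open Multiset

lemma parts_decomp {n : ℕ} (p : Nat.Partition n) :
    p.parts = Multiset.replicate (p.parts.count 1) 1 + p.parts.filter (fun x => 1 < x) := by
  conv_lhs => rw [← Multiset.filter_add_not (fun x => x = 1) p.parts]
  congr 1
  · rw [Multiset.filter_eq']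
  · apply Multiset.filter_congr
    intro x hx
    have := p.parts_pos hx
    constructor <;> intro h <;> omega

/-- Second method: every partition of `n+1` with more than one part has a unique
predecessor among the partitions of `n`, obtained either by adjoining a part 1, or by
replacing the `ℵ` unit parts of a Second-Kind (second method) partition by the single
part `ℵ + 1`. -/
theorem stmt10 (n : ℕ) (α : Nat.Partition (n + 1)) (hα : 1 < Multiset.card α.parts) :
    ∃! β : Nat.Partition n,
      α.parts = 1 ::ₘ β.parts ∨
        (SecondKind2 β ∧
          α.parts = (β.parts.count 1 + 1) ::ₘ β.parts.filter (fun x => 1 < x)) := by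
  by_cases h1 : (1 : ℕ) ∈ α.parts
  · -- β is α with one part 1 removed
    have hce : (1 : ℕ) ::ₘ α.parts.erase 1 = α.parts := Multiset.cons_erase h1
    have hsum : (α.parts.erase 1).sum = n := by
      have := α.parts_sum
      rw [← hce, Multiset.sum_cons] at this
      omega
    refine ⟨⟨α.parts.erase 1, fun hi => α.parts_pos (Multiset.mem_of_mem_erase hi), hsum⟩,
      Or.inl hce.symm, ?_⟩
    rintro β' (h' | ⟨⟨m, hm, hm1, _, hc1, hcm⟩, h'⟩)
    · ext1
      exact (Multiset.cons_inj_right 1).1 (by rw [← h', hce])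
    · exfalso
      rw [h'] at h1
      rcases Multiset.mem_cons.1 h1 with h | h
      · omega
      · have := (Multiset.mem_filter.1 h).2
        omega
  · -- no part equal to 1; remove the smallest part m and add m-1 ones
    have hne : α.parts.toFinset.Nonempty := by
      rw [Multiset.toFinset_nonempty]
      rw [← Multiset.card_pos]; omega
    set m := α.parts.toFinset.min' hne with hm_def
    have hmmem : m ∈ α.parts := Multiset.mem_toFinset.1 (α.parts.toFinset.min'_mem hne)
    have hmin : ∀ x ∈ α.parts, m ≤ x := fun x hx =>
      α.parts.toFinset.min'_le x (Multiset.mem_toFinset.2 hx)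
    have hm2 : 2 ≤ m := by
      have := α.parts_pos hmmem
      rcases Nat.lt_or_ge m 2 with h | h
      · have hm1 : m = 1 := by omega
        rw [hm1] at hmmem; exact absurd hmmem h1
      · exact h
    have hce : m ::ₘ α.parts.erase m = α.parts := Multiset.cons_erase hmmem
    have herase_mem : ∀ x ∈ α.parts.erase m, 2 ≤ x := by
      intro x hx
      have hx' := Multiset.mem_of_mem_erase hx
      have := α.parts_pos hx'
      rcases Nat.lt_or_ge x 2 with h | h
      · have hx1 : x = 1 := by omega
        rw [hx1] at hx'; exact absurd hx' h1
      · exact h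
    have herase_ne : α.parts.erase m ≠ 0 := by
      intro h
      have : Multiset.card α.parts = 1 := by
        rw [← hce, Multiset.card_cons, h]; simp
      omega
    -- the candidate partition
    have hsum : (Multiset.replicate (m - 1) 1 + α.parts.erase m).sum = n := by
      have := α.parts_sum
      rw [← hce, Multiset.sum_cons] at this
      rw [Multiset.sum_add, Multiset.sum_replicate, smul_eq_mul, mul_one]
      omega
    set βp : Multiset ℕ := Multiset.replicate (m - 1) 1 + α.parts.erase m with hβp
    have hβpos : ∀ {i : ℕ}, i ∈ βp → 0 < i := by
      intro i hi
      rcases Multiset.mem_add.1 hi with h | h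
      · rw [Multiset.eq_of_mem_replicate h]; omega
      · exact α.parts_pos (Multiset.mem_of_mem_erase h)
    set β : Nat.Partition n := ⟨βp, hβpos, hsum⟩ with hβ
    have hcount : βp.count 1 = m - 1 := by
      rw [hβp, Multiset.count_add, Multiset.count_replicate, if_pos rfl,
        Multiset.count_eq_zero.2 (fun h => by have := herase_mem 1 h; omega)]
      omega
    have hfilter : βp.filter (fun x => 1 < x) = α.parts.erase m := by
      rw [hβp, Multiset.filter_add, Multiset.filter_eq_nil.2
        (fun a ha => by rw [Multiset.eq_of_mem_replicate ha]; omega),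
        Multiset.filter_eq_self.2 (fun a ha => by have := herase_mem a ha; omega)]
      simp
    -- smallest element of erase m
    have hne' : (α.parts.erase m).toFinset.Nonempty := by
      rw [Multiset.toFinset_nonempty]; exact herase_ne
    set m' := (α.parts.erase m).toFinset.min' hne' with hm'_def
    have hm'mem : m' ∈ α.parts.erase m := Multiset.mem_toFinset.1 ((α.parts.erase m).toFinset.min'_mem hne')
    have hm'min : ∀ x ∈ α.parts.erase m, m' ≤ x := fun x hx =>
      (α.parts.erase m).toFinset.min'_le x (Multiset.mem_toFinset.2 hx)
    have hmm' : m ≤ m' := hmin m' (Multiset.mem_of_mem_erase hm'mem)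
    have hSK : SecondKind2 β := by
      refine ⟨m', Multiset.mem_add.2 (Or.inr hm'mem), by
        have := herase_mem m' hm'mem; omega, ?_, ?_⟩
      · intro x hx hx1
        rcases Multiset.mem_add.1 hx with h | h
        · rw [Multiset.eq_of_mem_replicate h] at hx1; omega
        · exact hm'min x h
      · show 1 ≤ βp.count 1 ∧ βp.count 1 < m'
        rw [hcount]; omega
    have hαeq : α.parts = (βp.count 1 + 1) ::ₘ βp.filter (fun x => 1 < x) := by
      rw [hcount, hfilter]
      have : m - 1 + 1 = m := by omega
      rw [this, hce]
    refine ⟨β, Or.inr ⟨hSK, hαeq⟩, ?_⟩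
    rintro β' (h' | ⟨⟨m'', hm''mem, hm''1, hm''min, hc1, hcm⟩, h'⟩)
    · exfalso; exact h1 (h' ▸ Multiset.mem_cons_self 1 β'.parts)
    · -- show β'.parts = βp
      set c := β'.parts.count 1 with hc_def
      have hmemα : c + 1 ∈ α.parts := h' ▸ Multiset.mem_cons_self _ _
      have hle : ∀ x ∈ α.parts, c + 1 ≤ x := by
        intro x hx
        rw [h'] at hx
        rcases Multiset.mem_cons.1 hx with h | h
        · omega
        · obtain ⟨hxb, hx1⟩ := Multiset.mem_filter.1 h
          have := hm''min x hxb hx1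
          omega
      have hcm' : c + 1 = m := le_antisymm (hle m hmmem) (hmin _ hmemα)
      have hfilter' : β'.parts.filter (fun x => 1 < x) = α.parts.erase m := by
        apply (Multiset.cons_inj_right m).1
        rw [hce, h', hcm']
      ext1
      show β'.parts = βp
      have hcnt : Multiset.count 1 β'.parts = m - 1 := by
        rw [← hc_def]; omega
      rw [parts_decomp β', hfilter', hβp, hcnt]
end

section
/- The map from partitions of n+1 with at least two parts and smallest part m ≥ 2, sending such a partition to the partition of n obtained by replacing the part m with m−1 parts equal to 1, is a bijection onto the set of partitions of n of the Second Kind (for the second method), i.e., partitions whose number ℵ of unit parts satisfies 1 ≤ ℵ < (smallest part exceeding 1), where the target partition has at least one part exceeding 1. -/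
open Multiset

lemma multiset_exists_min (s : Multiset ℕ) (h : s ≠ 0) : ∃ a ∈ s, ∀ b ∈ s, a ≤ b := by
  induction s using Multiset.induction_on with
  | empty => simp at h
  | cons a s ih =>
    rcases eq_or_ne s 0 with rfl | hs
    · exact ⟨a, by simp, by simp⟩
    · obtain ⟨b, hb, hmin⟩ := ih hs
      rcases le_total a b with hab | hba
      · refine ⟨a, by simp, fun c hc => ?_⟩
        rcases Multiset.mem_cons.1 hc with rfl | hc
        · exact le_rfl
        · exact hab.trans (hmin c hc)
      · refine ⟨b, Multiset.mem_cons_of_mem hb, fun c hc => ?_⟩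
        rcases Multiset.mem_cons.1 hc with rfl | hc
        · exact hba
        · exact hmin c hc

/-- The map sending a partition of `n+1` with at least two parts and smallest part
`m ≥ 2` to the partition of `n` obtained by replacing the part `m` with `m - 1` parts
equal to 1 is a bijection onto the Second-Kind (second method) partitions of `n`. -/
theorem stmt11 (n : ℕ) :
    (∀ α : Nat.Partition (n + 1), 2 ≤ Multiset.card α.parts →
        ∀ m, IsSmallest m α → 2 ≤ m →
        ∃ β : Nat.Partition n,
          β.parts = Multiset.replicate (m - 1) 1 + α.parts.erase m ∧ SecondKind2 β) ∧
    (∀ α α' : Nat.Partition (n + 1), 2 ≤ Multiset.card α.parts →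
        2 ≤ Multiset.card α'.parts → ∀ m m', IsSmallest m α → IsSmallest m' α' →
        2 ≤ m → 2 ≤ m' →
        Multiset.replicate (m - 1) 1 + α.parts.erase m =
          Multiset.replicate (m' - 1) 1 + α'.parts.erase m' → α = α') ∧
    (∀ β : Nat.Partition n, SecondKind2 β →
        ∃ α : Nat.Partition (n + 1), 2 ≤ Multiset.card α.parts ∧
          ∃ m, IsSmallest m α ∧ 2 ≤ m ∧
            β.parts = Multiset.replicate (m - 1) 1 + α.parts.erase m) := by
  refine ⟨?_, ?_, ?_⟩
  · intro α hcard m ⟨hmem, hmin⟩ hm2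
    have hsum : m + (α.parts.erase m).sum = n + 1 := by
      rw [← Multiset.sum_cons, Multiset.cons_erase hmem, α.parts_sum]
    have herase_sub : ∀ x ∈ α.parts.erase m, x ∈ α.parts :=
      fun x hx => Multiset.mem_of_mem_erase hx
    have hno1 : (α.parts.erase m).count 1 = 0 := by
      rw [Multiset.count_eq_zero]
      intro h1
      have := hmin 1 (herase_sub 1 h1)
      omega
    refine ⟨⟨Multiset.replicate (m - 1) 1 + α.parts.erase m, ?_, ?_⟩, rfl, ?_⟩
    · intro x hx
      rcases Multiset.mem_add.1 hx with hx | hx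
      · rw [Multiset.eq_of_mem_replicate hx]; norm_num
      · exact α.parts_pos (herase_sub x hx)
    · rw [Multiset.sum_add, Multiset.sum_replicate, smul_eq_mul, mul_one]
      omega
    · have hne : α.parts.erase m ≠ 0 := by
        intro h
        have : Multiset.card (α.parts.erase m) = Multiset.card α.parts - 1 :=
          Multiset.card_erase_of_mem hmem
        rw [h] at this
        simp at this
        omega
      obtain ⟨a, ha, hamin⟩ := multiset_exists_min _ hne
      have ham : m ≤ a := hmin a (herase_sub a ha)
      have hcount : (Multiset.replicate (m - 1) 1 + α.parts.erase m).count 1 = m - 1 := by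
        rw [Multiset.count_add, Multiset.count_replicate, hno1]; simp
      refine ⟨a, Multiset.mem_add.2 (Or.inr ha), by omega, ?_, ?_, ?_⟩
      · intro x hx hx1
        rcases Multiset.mem_add.1 hx with hx | hx
        · rw [Multiset.eq_of_mem_replicate hx] at hx1; omega
        · exact hamin x hx
      · show 1 ≤ (Multiset.replicate (m - 1) 1 + α.parts.erase m).count 1
        omega
      · show (Multiset.replicate (m - 1) 1 + α.parts.erase m).count 1 < a
        omega
  · intro α α' hc hc' m m' ⟨hmem, hmin⟩ ⟨hmem', hmin'⟩ hm2 hm2' heq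
    have hno1 : (α.parts.erase m).count 1 = 0 := by
      rw [Multiset.count_eq_zero]
      intro h1
      have := hmin 1 (Multiset.mem_of_mem_erase h1); omega
    have hno1' : (α'.parts.erase m').count 1 = 0 := by
      rw [Multiset.count_eq_zero]
      intro h1
      have := hmin' 1 (Multiset.mem_of_mem_erase h1); omega
    have hcnt := congrArg (Multiset.count 1) heq
    rw [Multiset.count_add, Multiset.count_add, Multiset.count_replicate,
      Multiset.count_replicate, hno1, hno1'] at hcnt
    simp at hcnt
    have hmm : m = m' := by omega
    subst hmm
    have herase : α.parts.erase m = α'.parts.erase m := by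
      exact add_left_cancel heq
    have : α.parts = α'.parts := by
      rw [← Multiset.cons_erase hmem, ← Multiset.cons_erase hmem', herase]
    exact Nat.Partition.ext this
  · intro β ⟨m₀, hm₀mem, hm₀1, hm₀min, hc1, hcm⟩
    set ℵ := β.parts.count 1 with hℵ
    have hfilter : Multiset.filter (fun x => ¬ 1 < x) β.parts = Multiset.replicate ℵ 1 := by
      have h1 : Multiset.filter (fun x => ¬ 1 < x) β.parts
          = Multiset.filter (fun x => x = 1) β.parts := by
        apply Multiset.filter_congr
        intro x hx
        have := β.parts_pos hx
        constructor <;> intro h <;> omega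
      rw [h1, Multiset.filter_eq']
    have hsplit : β.parts = Multiset.replicate ℵ 1 + Multiset.filter (1 < ·) β.parts := by
      rw [← hfilter, add_comm]
      exact (Multiset.filter_add_not _ _).symm
    set F := Multiset.filter (1 < ·) β.parts with hF
    have hFsub : ∀ x ∈ F, x ∈ β.parts := fun x hx => Multiset.mem_of_mem_filter hx
    have hFgt : ∀ x ∈ F, 1 < x := fun x hx => (Multiset.mem_filter.1 hx).2
    have hm₀F : m₀ ∈ F := Multiset.mem_filter.2 ⟨hm₀mem, hm₀1⟩
    have hsum : ℵ + F.sum = n := by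
      have := β.parts_sum
      rw [hsplit, Multiset.sum_add, Multiset.sum_replicate, smul_eq_mul, mul_one] at this
      omega
    refine ⟨⟨(ℵ + 1) ::ₘ F, ?_, ?_⟩, ?_, ℵ + 1, ⟨by simp, ?_⟩, by omega, ?_⟩
    · intro x hx
      rcases Multiset.mem_cons.1 hx with rfl | hx
      · omega
      · have := hFgt x hx; omega
    · rw [Multiset.sum_cons]; omega
    · simp only [Multiset.card_cons]
      have : 0 < Multiset.card F := Multiset.card_pos.2 (fun h => by simp [h] at hm₀F)
      omega
    · intro x hx
      rcases Multiset.mem_cons.1 hx with rfl | hx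
      · exact le_rfl
      · have := hm₀min x (hFsub x hx) (hFgt x hx)
        omega
    · show β.parts = Multiset.replicate (ℵ + 1 - 1) 1 + ((ℵ + 1) ::ₘ F).erase (ℵ + 1)
      rw [Multiset.erase_cons_head, Nat.add_sub_cancel]
      exact hsplit
end

section
/- For n ≥ 1, P(n+1) = P(n) + Q₂(n) + 1, where Q₂(n) is the number of partitions of n (with at least one part greater than 1) whose number ℵ of unit parts satisfies 1 ≤ ℵ < (smallest part greater than 1). -/
open Multiset

/-! ### Auxiliary definitions and lemmas -/

/-- The all-ones partition of `n`. -/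
def onesP (n : ℕ) : Nat.Partition n :=
  ⟨replicate n 1, fun {i} hi => by rw [Multiset.eq_of_mem_replicate hi]; norm_num, by simp⟩

lemma onesP_parts (n : ℕ) : (onesP n).parts = replicate n 1 := rfl

lemma not_sk2_ones (n : ℕ) : ¬ SecondKind2 (onesP n) := by
  rintro ⟨m, hm, h1m, -⟩
  rw [onesP_parts] at hm
  have : m = 1 := Multiset.eq_of_mem_replicate hm
  omega

/-- Partitions of `n+1` containing a part `1` biject with partitions of `n`. -/
def eOnes (n : ℕ) : {p : Nat.Partition (n + 1) // 1 ∈ p.parts} ≃ Nat.Partition n where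
  toFun p := ⟨p.1.parts.erase 1,
    fun {i} hi => p.1.parts_pos (Multiset.mem_of_mem_erase hi), by
      have h := p.1.parts_sum
      rw [← Multiset.cons_erase p.2, Multiset.sum_cons] at h
      omega⟩
  invFun q := ⟨⟨1 ::ₘ q.parts,
    fun {i} hi => by
      rcases Multiset.mem_cons.1 hi with h | h
      · omega
      · exact q.parts_pos h,
    by rw [Multiset.sum_cons, q.parts_sum]; omega⟩, Multiset.mem_cons_self 1 _⟩
  left_inv p := Subtype.ext (Nat.Partition.ext (Multiset.cons_erase p.2))
  right_inv q := Nat.Partition.ext (Multiset.erase_cons_head 1 q.parts)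

lemma parts_toFinset_nonempty (n : ℕ) (p : Nat.Partition (n + 1)) :
    p.parts.toFinset.Nonempty := by
  rw [Finset.nonempty_iff_ne_empty]
  intro h
  have h0 : p.parts = 0 := Multiset.toFinset_eq_empty.mp h
  have := p.parts_sum
  rw [h0] at this
  simp at this

/-- The smallest part of a partition of `n+1`. -/
noncomputable def minPart (n : ℕ) (p : Nat.Partition (n + 1)) : ℕ :=
  p.parts.toFinset.min' (parts_toFinset_nonempty n p)

lemma minPart_mem (n : ℕ) (p : Nat.Partition (n + 1)) : minPart n p ∈ p.parts :=
  Multiset.mem_toFinset.mp (Finset.min'_mem _ _)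

lemma minPart_le (n : ℕ) (p : Nat.Partition (n + 1)) {x : ℕ} (hx : x ∈ p.parts) :
    minPart n p ≤ x :=
  Finset.min'_le _ _ (Multiset.mem_toFinset.mpr hx)

/-- Forward map: replace the smallest part `m` by `m-1` ones. -/
noncomputable def fwd (n : ℕ) (p : Nat.Partition (n + 1)) : Nat.Partition n where
  parts := replicate (minPart n p - 1) 1 + p.parts.erase (minPart n p)
  parts_pos {i} hi := by
    rcases Multiset.mem_add.1 hi with h | h
    · rw [Multiset.eq_of_mem_replicate h]; norm_num
    · exact p.parts_pos (Multiset.mem_of_mem_erase h)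
  parts_sum := by
    have h1 : 1 ≤ minPart n p := p.parts_pos (minPart_mem n p)
    have h2 := p.parts_sum
    rw [← Multiset.cons_erase (minPart_mem n p), Multiset.sum_cons] at h2
    rw [Multiset.sum_add, Multiset.sum_replicate, smul_eq_mul, mul_one]
    omega

lemma split_parts (n : ℕ) (q : Nat.Partition n) :
    replicate (q.parts.count 1) 1 + q.parts.filter (1 < ·) = q.parts := by
  have h : q.parts.filter (fun a => ¬ 1 < a) = replicate (q.parts.count 1) 1 := by
    rw [← Multiset.filter_eq' q.parts 1]
    apply Multiset.filter_congr
    intro x hx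
    have := q.parts_pos hx
    constructor
    · intro h'; omega
    · intro h'; omega
  calc replicate (q.parts.count 1) 1 + q.parts.filter (1 < ·)
      = q.parts.filter (1 < ·) + q.parts.filter (fun a => ¬ 1 < a) := by rw [h, add_comm]
    _ = q.parts := Multiset.filter_add_not _ _

/-- Backward map: remove all ones (`c` of them) and add a part `c+1`. -/
def bwd (n : ℕ) (q : Nat.Partition n) : Nat.Partition (n + 1) where
  parts := (q.parts.count 1 + 1) ::ₘ q.parts.filter (1 < ·)
  parts_pos {i} hi := by
    rcases Multiset.mem_cons.1 hi with h | h
    · omega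
    · exact q.parts_pos (Multiset.mem_filter.1 h).1
  parts_sum := by
    have h := congrArg Multiset.sum (split_parts n q)
    rw [Multiset.sum_add, Multiset.sum_replicate, smul_eq_mul, mul_one, q.parts_sum] at h
    rw [Multiset.sum_cons]
    omega

lemma fwd_parts (n : ℕ) (p : Nat.Partition (n + 1)) :
    (fwd n p).parts = replicate (minPart n p - 1) 1 + p.parts.erase (minPart n p) := rfl

lemma bwd_parts (n : ℕ) (q : Nat.Partition n) :
    (bwd n q).parts = (q.parts.count 1 + 1) ::ₘ q.parts.filter (1 < ·) := rfl

lemma minPart_ge_two (n : ℕ) (p : Nat.Partition (n + 1)) (hp : 1 ∉ p.parts) :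
    2 ≤ minPart n p := by
  have h1 : 0 < minPart n p := p.parts_pos (minPart_mem n p)
  have h2 : minPart n p ≠ 1 := by
    intro h
    have hm := minPart_mem n p
    rw [h] at hm
    exact hp hm
  omega

lemma count_one_fwd (n : ℕ) (p : Nat.Partition (n + 1)) (hp : 1 ∉ p.parts) :
    (fwd n p).parts.count 1 = minPart n p - 1 := by
  have h1 : (1 : ℕ) ∉ p.parts.erase (minPart n p) :=
    fun h => hp (Multiset.mem_of_mem_erase h)
  rw [fwd_parts, Multiset.count_add, Multiset.count_replicate_self,
    Multiset.count_eq_zero.2 h1, add_zero]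

lemma filter_fwd (n : ℕ) (p : Nat.Partition (n + 1)) (hp : 1 ∉ p.parts) :
    (fwd n p).parts.filter (1 < ·) = p.parts.erase (minPart n p) := by
  rw [fwd_parts, Multiset.filter_add]
  rw [Multiset.filter_eq_nil.2 (fun a ha => by rw [Multiset.eq_of_mem_replicate ha]; omega)]
  have h2 : ∀ a ∈ p.parts.erase (minPart n p), (1 : ℕ) < a := by
    intro a ha
    have h0 : 0 < a := p.parts_pos (Multiset.mem_of_mem_erase ha)
    have h1 : a ≠ 1 := by
      intro h
      rw [h] at ha
      exact hp (Multiset.mem_of_mem_erase ha)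
    omega
  rw [Multiset.filter_eq_self.2 h2, zero_add]

lemma bwd_fwd (n : ℕ) (p : Nat.Partition (n + 1)) (hp : 1 ∉ p.parts) :
    bwd n (fwd n p) = p := by
  apply Nat.Partition.ext
  rw [bwd_parts, count_one_fwd n p hp, filter_fwd n p hp]
  have h2 := minPart_ge_two n p hp
  rw [show minPart n p - 1 + 1 = minPart n p by omega]
  exact Multiset.cons_erase (minPart_mem n p)

lemma minPart_bwd (n : ℕ) (q : Nat.Partition n) (hq : SecondKind2 q ∨ q = onesP n) :
    minPart n (bwd n q) = q.parts.count 1 + 1 := by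
  apply le_antisymm
  · exact minPart_le n _ (Multiset.mem_cons_self _ _)
  · apply Finset.le_min'
    intro y hy
    have hy' : y ∈ (bwd n q).parts := Multiset.mem_toFinset.mp hy
    rw [bwd_parts] at hy'
    rcases Multiset.mem_cons.1 hy' with h | h
    · omega
    · have hmem := Multiset.mem_filter.1 h
      rcases hq with ⟨m, hm, h1m, hle, hc1, hcm⟩ | rfl
      · have := hle y hmem.1 (by simpa using hmem.2)
        omega
      · exfalso
        have hmem1 := hmem.1
        rw [onesP_parts] at hmem1
        have h1 : y = 1 := Multiset.eq_of_mem_replicate hmem1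
        have h2 : (1 : ℕ) < y := by simpa using hmem.2
        omega

lemma fwd_bwd (n : ℕ) (q : Nat.Partition n) (hq : SecondKind2 q ∨ q = onesP n) :
    fwd n (bwd n q) = q := by
  apply Nat.Partition.ext
  rw [fwd_parts, minPart_bwd n q hq, bwd_parts,
    Multiset.erase_cons_head, Nat.add_sub_cancel]
  exact split_parts n q

lemma fwd_prop (n : ℕ) (p : Nat.Partition (n + 1)) (hp : 1 ∉ p.parts) :
    SecondKind2 (fwd n p) ∨ fwd n p = onesP n := by
  by_cases he : p.parts.erase (minPart n p) = 0
  · right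
    have hpp : p.parts = {minPart n p} := by
      rw [← Multiset.cons_erase (minPart_mem n p), he]
      rfl
    have hsum := p.parts_sum
    rw [hpp] at hsum
    simp at hsum
    apply Nat.Partition.ext
    rw [fwd_parts, onesP_parts, he, add_zero, hsum]
    simp
  · left
    have hne : (p.parts.erase (minPart n p)).toFinset.Nonempty := by
      rw [Finset.nonempty_iff_ne_empty]
      intro h
      exact he (Multiset.toFinset_eq_empty.mp h)
    set m' := (p.parts.erase (minPart n p)).toFinset.min' hne with hm'def
    have hm'mem : m' ∈ p.parts.erase (minPart n p) :=
      Multiset.mem_toFinset.mp (Finset.min'_mem _ _)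
    have hm'p : m' ∈ p.parts := Multiset.mem_of_mem_erase hm'mem
    have hm'pos : 0 < m' := p.parts_pos hm'p
    have hm'ne1 : m' ≠ 1 := by
      intro h
      rw [h] at hm'p
      exact hp hm'p
    have hmle : minPart n p ≤ m' := minPart_le n p hm'p
    have h2 := minPart_ge_two n p hp
    refine ⟨m', ?_, by omega, ?_, ?_, ?_⟩
    · rw [fwd_parts]
      exact Multiset.mem_add.2 (Or.inr hm'mem)
    · intro x hx hx1
      rw [fwd_parts] at hx
      rcases Multiset.mem_add.1 hx with h | h
      · rw [Multiset.eq_of_mem_replicate h] at hx1; omega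
      · exact Finset.min'_le _ _ (Multiset.mem_toFinset.mpr h)
    · rw [count_one_fwd n p hp]; omega
    · rw [count_one_fwd n p hp]; omega

lemma bwd_not_one (n : ℕ) (q : Nat.Partition n) (hcount : 1 ≤ q.parts.count 1) :
    1 ∉ (bwd n q).parts := by
  intro h
  rw [bwd_parts] at h
  rcases Multiset.mem_cons.1 h with h | h
  · omega
  · have h2 := (Multiset.mem_filter.1 h).2
    norm_num at h2

/-- Partitions of `n+1` with no part equal to `1` biject with second-kind-2 partitions of `n`
together with the all-ones partition. -/
noncomputable def eNoOnes (n : ℕ) (hn : 1 ≤ n) :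
    {p : Nat.Partition (n + 1) // 1 ∉ p.parts} ≃
      {q : Nat.Partition n // SecondKind2 q ∨ q = onesP n} where
  toFun p := ⟨fwd n p.1, fwd_prop n p.1 p.2⟩
  invFun q := ⟨bwd n q.1, by
    apply bwd_not_one
    rcases q.2 with ⟨m, hm, h1m, hle, hc1, hcm⟩ | h
    · exact hc1
    · rw [h]
      have : (onesP n).parts.count 1 = n := by
        rw [onesP_parts, Multiset.count_replicate_self]
      omega⟩
  left_inv p := Subtype.ext (bwd_fwd n p.1 p.2)
  right_inv q := Subtype.ext (fwd_bwd n q.1 q.2)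

/-- `P(n+1) = P(n) + Q₂(n) + 1` for `n ≥ 1`, where `Q₂(n)` counts the Second-Kind
partitions of the second method. -/
theorem stmt12 (n : ℕ) (hn : 1 ≤ n) :
    Nat.card (Nat.Partition (n + 1)) =
      Nat.card (Nat.Partition n) + Nat.card {p : Nat.Partition n // SecondKind2 p} + 1 := by
  classical
  rw [Nat.card_eq_fintype_card, Nat.card_eq_fintype_card, Nat.card_eq_fintype_card]
  rw [Fintype.card_congr (Equiv.sumCompl (fun p : Nat.Partition (n + 1) => 1 ∈ p.parts)).symm]
  rw [Fintype.card_sum, Fintype.card_congr (eOnes n), Fintype.card_congr (eNoOnes n hn)]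
  have key : Fintype.card {q : Nat.Partition n // SecondKind2 q ∨ q = onesP n}
      = Fintype.card {q : Nat.Partition n // SecondKind2 q} + 1 := by
    rw [Fintype.card_subtype, Fintype.card_subtype]
    rw [show Finset.univ.filter (fun q : Nat.Partition n => SecondKind2 q ∨ q = onesP n)
          = insert (onesP n) (Finset.univ.filter (fun q => SecondKind2 q)) from ?_]
    · rw [Finset.card_insert_of_notMem (by simp [not_sk2_ones n])]
    · ext q
      simp only [Finset.mem_filter, Finset.mem_univ, true_and, Finset.mem_insert]
      tauto
  omega
end

section
/- Q(n) = Q₂(n) + 1 for all n ≥ 1, where Q(n) counts partitions of n whose smallest part occurs exactly once (or with a single part), and Q₂(n) counts partitions of n with at least one part > 1 whose number ℵ of unit parts satisfies 1 ≤ ℵ < (smallest part exceeding 1). -/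
open Multiset

/-- the chosen smallest part -/
noncomputable def spart {n : ℕ} (p : Nat.Partition n) (hp : SecondKind p) : ℕ := hp.choose

lemma spart_spec {n : ℕ} (p : Nat.Partition n) (hp : SecondKind p) :
    IsSmallest (spart p hp) p ∧ p.parts.count (spart p hp) = 1 := hp.choose_spec

lemma spart_pos {n : ℕ} (p : Nat.Partition n) (hp : SecondKind p) : 1 ≤ spart p hp :=
  p.parts_pos (spart_spec p hp).1.1

lemma erase_gt {n : ℕ} (p : Nat.Partition n) (hp : SecondKind p) :
    ∀ x ∈ p.parts.erase (spart p hp), spart p hp < x := by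
  intro x hx
  obtain ⟨⟨hmem, hmin⟩, hcount⟩ := spart_spec p hp
  have hxp : x ∈ p.parts := mem_of_mem_erase hx
  rcases lt_or_eq_of_le (hmin x hxp) with h | h
  · exact h
  · exfalso
    have h0 : count (spart p hp) (p.parts.erase (spart p hp)) = 0 := by
      rw [count_erase_self, hcount]
    rw [← h] at hx
    exact (count_eq_zero.mp h0) hx

lemma exists_min_of_ne_zero (t : Multiset ℕ) (ht : t ≠ 0) :
    ∃ m ∈ t, ∀ x ∈ t, m ≤ x := by
  have hne : t.toFinset.Nonempty := by
    obtain ⟨a, ha⟩ := exists_mem_of_ne_zero ht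
    exact ⟨a, mem_toFinset.mpr ha⟩
  refine ⟨t.toFinset.min' hne, mem_toFinset.mp (t.toFinset.min'_mem hne), ?_⟩
  intro x hx
  exact t.toFinset.min'_le x (mem_toFinset.mpr hx)

/-- forward construction -/
noncomputable def qOf {n : ℕ} (p : Nat.Partition n) (hp : SecondKind p) : Nat.Partition n where
  parts := p.parts.erase (spart p hp) + replicate (spart p hp) 1
  parts_pos := by
    intro i hi
    rcases mem_add.mp hi with h | h
    · exact p.parts_pos (mem_of_mem_erase h)
    · rw [eq_of_mem_replicate h]; norm_num
  parts_sum := by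
    rw [sum_add, sum_replicate, smul_eq_mul, mul_one]
    have h1 : spart p hp ::ₘ p.parts.erase (spart p hp) = p.parts :=
      cons_erase (spart_spec p hp).1.1
    have h2 := congrArg sum h1
    rw [sum_cons, p.parts_sum] at h2
    omega

lemma qOf_count_one {n : ℕ} (p : Nat.Partition n) (hp : SecondKind p) :
    (qOf p hp).parts.count 1 = spart p hp := by
  show count 1 (p.parts.erase (spart p hp) + replicate (spart p hp) 1) = _
  rw [count_add, count_replicate_self]
  have : count 1 (p.parts.erase (spart p hp)) = 0 := by
    rw [count_eq_zero]
    intro h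
    have := erase_gt p hp 1 h
    have := spart_pos p hp
    omega
  omega

lemma qOf_secondKind2 {n : ℕ} (p : Nat.Partition n) (hp : SecondKind p)
    (h2 : p.parts.erase (spart p hp) ≠ 0) : SecondKind2 (qOf p hp) := by
  obtain ⟨m, hm, hmmin⟩ := exists_min_of_ne_zero _ h2
  have hsm : spart p hp < m := erase_gt p hp m hm
  have hs1 : 1 ≤ spart p hp := spart_pos p hp
  refine ⟨m, ?_, by omega, ?_, ?_, ?_⟩
  · exact mem_add.mpr (Or.inl hm)
  · intro x hx h1x
    rcases mem_add.mp hx with h | h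
    · exact hmmin x h
    · rw [eq_of_mem_replicate h] at h1x; omega
  · rw [qOf_count_one]; omega
  · rw [qOf_count_one]; omega

/-- backward construction -/
def pOf {n : ℕ} (q : Nat.Partition n) (hq : SecondKind2 q) : Nat.Partition n where
  parts := q.parts.filter (1 < ·) + {q.parts.count 1}
  parts_pos := by
    intro i hi
    rcases mem_add.mp hi with h | h
    · exact q.parts_pos (mem_filter.mp h).1
    · rw [mem_singleton.mp h]
      obtain ⟨m, _, _, _, h1, _⟩ := hq
      omega
  parts_sum := by
    have hdec : q.parts.filter (1 < ·) + q.parts.filter (fun x => ¬ 1 < x) = q.parts :=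
      filter_add_not _ _
    have h2 : q.parts.filter (fun x => ¬ 1 < x) = replicate (q.parts.count 1) 1 := by
      rw [← filter_eq']
      apply filter_congr
      intro x hx
      have := q.parts_pos hx
      constructor
      · intro h; omega
      · intro h; omega
    have := congrArg sum hdec
    rw [sum_add, h2, sum_replicate, smul_eq_mul, mul_one, q.parts_sum] at this
    rw [sum_add, sum_singleton]
    exact this

lemma pOf_isSmallest {n : ℕ} (q : Nat.Partition n) (hq : SecondKind2 q) :
    IsSmallest (q.parts.count 1) (pOf q hq) ∧ (pOf q hq).parts.count (q.parts.count 1) = 1 := by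
  obtain ⟨m, hm, h1m, hmmin, h1, hcm⟩ := hq
  have key : ∀ x ∈ q.parts.filter (1 < ·), q.parts.count 1 < x := by
    intro x hx
    obtain ⟨hxq, h1x⟩ := mem_filter.mp hx
    exact lt_of_lt_of_le hcm (hmmin x hxq h1x)
  refine ⟨⟨?_, ?_⟩, ?_⟩
  · exact mem_add.mpr (Or.inr (mem_singleton_self _))
  · intro x hx
    rcases mem_add.mp hx with h | h
    · exact le_of_lt (key x h)
    · rw [mem_singleton.mp h]
  · show count _ (q.parts.filter (1 < ·) + {q.parts.count 1}) = 1
    rw [count_add, count_singleton_self]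
    have : count (q.parts.count 1) (q.parts.filter (1 < ·)) = 0 := by
      rw [count_eq_zero]
      intro h
      exact absurd rfl (ne_of_gt (key _ h))
    omega

lemma pOf_secondKind {n : ℕ} (q : Nat.Partition n) (hq : SecondKind2 q) :
    SecondKind (pOf q hq) :=
  ⟨q.parts.count 1, pOf_isSmallest q hq⟩

lemma pOf_spart {n : ℕ} (q : Nat.Partition n) (hq : SecondKind2 q) :
    spart (pOf q hq) (pOf_secondKind q hq) = q.parts.count 1 :=
  isSmallest_unique (spart_spec _ (pOf_secondKind q hq)).1 (pOf_isSmallest q hq).1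

lemma pOf_erase_ne_zero {n : ℕ} (q : Nat.Partition n) (hq : SecondKind2 q) :
    (pOf q hq).parts.erase (spart (pOf q hq) (pOf_secondKind q hq)) ≠ 0 := by
  rw [pOf_spart]
  obtain ⟨m, hm, h1m, hmmin, h1, hcm⟩ := hq
  have hmf : m ∈ q.parts.filter (1 < ·) := mem_filter.mpr ⟨hm, h1m⟩
  show ((q.parts.filter (1 < ·) + {q.parts.count 1}).erase (q.parts.count 1)) ≠ 0
  rw [erase_add_right_pos _ (mem_singleton_self _), erase_singleton, add_zero]
  intro h0
  rw [h0] at hmf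
  exact notMem_zero m hmf

lemma qOf_pOf {n : ℕ} (q : Nat.Partition n) (hq : SecondKind2 q) :
    qOf (pOf q hq) (pOf_secondKind q hq) = q := by
  apply Nat.Partition.ext
  show (pOf q hq).parts.erase (spart (pOf q hq) (pOf_secondKind q hq)) +
    replicate (spart (pOf q hq) (pOf_secondKind q hq)) 1 = q.parts
  rw [pOf_spart]
  have herase : (pOf q hq).parts.erase (q.parts.count 1) = q.parts.filter (1 < ·) := by
    show ((q.parts.filter (1 < ·) + {q.parts.count 1}).erase (q.parts.count 1)) = _
    rw [erase_add_right_pos _ (mem_singleton_self _), erase_singleton, add_zero]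
  rw [herase]
  have h2 : replicate (q.parts.count 1) 1 = q.parts.filter (fun x => ¬ 1 < x) := by
    rw [← filter_eq']
    symm
    apply filter_congr
    intro x hx
    have := q.parts_pos hx
    constructor
    · intro h; omega
    · intro h; omega
  rw [h2, filter_add_not]

lemma pOf_qOf {n : ℕ} (p : Nat.Partition n) (hp : SecondKind p)
    (h2 : p.parts.erase (spart p hp) ≠ 0) :
    pOf (qOf p hp) (qOf_secondKind2 p hp h2) = p := by
  apply Nat.Partition.ext
  show (qOf p hp).parts.filter (1 < ·) + {(qOf p hp).parts.count 1} = p.parts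
  rw [qOf_count_one]
  have hfil : (qOf p hp).parts.filter (1 < ·) = p.parts.erase (spart p hp) := by
    show (p.parts.erase (spart p hp) + replicate (spart p hp) 1).filter (1 < ·) = _
    rw [filter_add]
    have ha : (p.parts.erase (spart p hp)).filter (1 < ·) = p.parts.erase (spart p hp) := by
      rw [filter_eq_self]
      intro x hx
      have := erase_gt p hp x hx
      have := spart_pos p hp
      omega
    have hb : (replicate (spart p hp) 1).filter ((1 : ℕ) < ·) = 0 := by
      rw [filter_eq_nil]
      intro x hx
      rw [eq_of_mem_replicate hx]
      omega
    rw [ha, hb, add_zero]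
  rw [hfil]
  rw [add_comm, singleton_add]
  exact cons_erase (spart_spec p hp).1.1

/-- `Q(n) = Q₂(n) + 1` for all `n ≥ 1`. -/
theorem stmt13 (n : ℕ) (hn : 1 ≤ n) :
    Nat.card {p : Nat.Partition n // SecondKind p} =
      Nat.card {p : Nat.Partition n // SecondKind2 p} + 1 := by
  have hn0 : n ≠ 0 := by omega
  -- special partition
  have hind : SecondKind (Nat.Partition.indiscrete n) := by
    refine ⟨n, ⟨?_, ?_⟩, ?_⟩ <;>
      simp [Nat.Partition.indiscrete_parts hn0]
  -- the equivalence
  have E : {p : Nat.Partition n // SecondKind p} ≃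
      Option {p : Nat.Partition n // SecondKind2 p} := by
    refine
      { toFun := fun x =>
          if h : x.1.parts.erase (spart x.1 x.2) = 0 then none
          else some ⟨qOf x.1 x.2, qOf_secondKind2 x.1 x.2 h⟩
        invFun := fun o => o.elim ⟨Nat.Partition.indiscrete n, hind⟩
          (fun y => ⟨pOf y.1 y.2, pOf_secondKind y.1 y.2⟩)
        left_inv := ?_
        right_inv := ?_ }
    · rintro ⟨p, hp⟩
      dsimp only
      by_cases h : p.parts.erase (spart p hp) = 0
      · rw [dif_pos h]
        show (⟨Nat.Partition.indiscrete n, hind⟩ :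
          {p : Nat.Partition n // SecondKind p}) = ⟨p, hp⟩
        apply Subtype.ext
        apply Nat.Partition.ext
        show (Nat.Partition.indiscrete n).parts = p.parts
        rw [Nat.Partition.indiscrete_parts hn0]
        have hcons : spart p hp ::ₘ (0 : Multiset ℕ) = p.parts := by
          rw [← h]; exact cons_erase (spart_spec p hp).1.1
        have hsum := p.parts_sum
        rw [← hcons, sum_cons, sum_zero, add_zero] at hsum
        rw [← hcons, cons_zero, hsum]
      · rw [dif_neg h]
        dsimp only [Option.elim]
        show (⟨pOf (qOf p hp) (qOf_secondKind2 p hp h),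
          pOf_secondKind _ _⟩ : {p : Nat.Partition n // SecondKind p}) = ⟨p, hp⟩
        exact Subtype.ext (pOf_qOf p hp h)
    · rintro (_ | ⟨q, hq⟩)
      · dsimp only [Option.elim]
        rw [dif_pos]
        have hs : spart (Nat.Partition.indiscrete n) hind = n := by
          have hh := (spart_spec (Nat.Partition.indiscrete n) hind).1.1
          rw [Nat.Partition.indiscrete_parts hn0, mem_singleton] at hh
          exact hh
        rw [hs, Nat.Partition.indiscrete_parts hn0, erase_singleton]
      · dsimp only [Option.elim]
        rw [dif_neg (pOf_erase_ne_zero q hq)]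
        congr 1
        exact Subtype.ext (qOf_pOf q hq)
  rw [Nat.card_congr E]
  have hfin : Finite {p : Nat.Partition n // SecondKind2 p} := Subtype.finite
  letI : Fintype {p : Nat.Partition n // SecondKind2 p} := Fintype.ofFinite _
  rw [Nat.card_eq_fintype_card, Nat.card_eq_fintype_card, Fintype.card_option]
end

section
/- Every partition of n+1 whose smallest part is 1 arises from a unique partition of n by adjoining a part 1, and every partition of n+1 with at least two parts and smallest part m ≥ 2 arises from a unique partition of n by the unit-collection operation (replacing m−1 unit parts by the single part m). Consequently the partitions of n+1 are partitioned into three disjoint classes: those containing a part 1, those with all parts ≥ 2 and at least two parts, and the single-part partition {n+1}. -/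
open Multiset

/-- Every partition of `n+1` containing a part 1 arises from a unique partition of `n` by
adjoining a part 1; every partition of `n+1` with at least two parts and smallest part
`m ≥ 2` arises from a unique partition of `n` by the unit-collection operation (replacing
`m - 1` unit parts by the single part `m`); and the partitions of `n+1` split into three
pairwise disjoint classes: those containing a part 1, those with all parts ≥ 2 and at
least two parts, and the single-part partition `{n+1}`. -/
theorem stmt14 (n : ℕ) (hn : 1 ≤ n) :
    (∀ α : Nat.Partition (n + 1), 1 ∈ α.parts →
        ∃! β : Nat.Partition n, α.parts = 1 ::ₘ β.parts) ∧
    (∀ α : Nat.Partition (n + 1), 2 ≤ Multiset.card α.parts →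
        ∀ m, IsSmallest m α → 2 ≤ m →
        ∃! β : Nat.Partition n,
          β.parts.count 1 = m - 1 ∧ α.parts = m ::ₘ β.parts.filter (fun x => 1 < x)) ∧
    (∀ α : Nat.Partition (n + 1),
        (1 ∈ α.parts ∨ ((∀ x ∈ α.parts, 2 ≤ x) ∧ 2 ≤ Multiset.card α.parts) ∨
            α.parts = {n + 1}) ∧
        ¬(1 ∈ α.parts ∧ ((∀ x ∈ α.parts, 2 ≤ x) ∧ 2 ≤ Multiset.card α.parts)) ∧
        ¬(1 ∈ α.parts ∧ α.parts = {n + 1}) ∧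
        ¬(((∀ x ∈ α.parts, 2 ≤ x) ∧ 2 ≤ Multiset.card α.parts) ∧ α.parts = {n + 1})) := by
  have hext : ∀ {p q : Nat.Partition n}, p.parts = q.parts → p = q := by
    intro p q h; cases p; cases q; simpa using h
  refine ⟨?_, ?_, ?_⟩
  · intro α h1
    have hs : (1 ::ₘ α.parts.erase 1).sum = n + 1 := by
      rw [Multiset.cons_erase h1, α.parts_sum]
    rw [Multiset.sum_cons] at hs
    refine ⟨⟨α.parts.erase 1, fun {x} hx => α.parts_pos (Multiset.mem_of_mem_erase hx), by omega⟩,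
      (Multiset.cons_erase h1).symm, ?_⟩
    intro β' hβ'
    apply hext
    have : α.parts.erase 1 = β'.parts := by rw [hβ']; simp
    simpa using this.symm
  · intro α hcard m hm h2m
    have hmem := hm.1
    have hsum : m + (α.parts.erase m).sum = n + 1 := by
      rw [← Multiset.sum_cons, Multiset.cons_erase hmem, α.parts_sum]
    have ht : ∀ x ∈ α.parts.erase m, 1 < x := fun x hx =>
      lt_of_lt_of_le (by omega) (hm.2 x (Multiset.mem_of_mem_erase hx))
    have hβpos : ∀ {x : ℕ}, x ∈ Multiset.replicate (m - 1) 1 + α.parts.erase m → 0 < x := by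
      intro x hx
      rcases Multiset.mem_add.1 hx with h | h
      · rw [Multiset.eq_of_mem_replicate h]; omega
      · exact lt_trans one_pos (ht x h)
    have hβsum : (Multiset.replicate (m - 1) 1 + α.parts.erase m).sum = n := by
      rw [Multiset.sum_add, Multiset.sum_replicate, smul_eq_mul, mul_one]
      omega
    have hfil : Multiset.filter (fun x => 1 < x)
        (Multiset.replicate (m - 1) 1 + α.parts.erase m) = α.parts.erase m := by
      rw [Multiset.filter_add, Multiset.filter_eq_self.2 ht,
        Multiset.filter_eq_nil.2 (by intro a ha; rw [Multiset.eq_of_mem_replicate ha]; omega),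
        zero_add]
    refine ⟨⟨Multiset.replicate (m - 1) 1 + α.parts.erase m, hβpos, hβsum⟩, ⟨?_, ?_⟩, ?_⟩
    · show Multiset.count 1 _ = m - 1
      rw [Multiset.count_add, Multiset.count_replicate, if_pos rfl,
        Multiset.count_eq_zero.2 (fun h => by have := ht 1 h; omega)]
      omega
    · show α.parts = m ::ₘ Multiset.filter _ _
      rw [hfil, Multiset.cons_erase hmem]
    · rintro β' ⟨hc1, heq⟩
      apply hext
      show β'.parts = Multiset.replicate (m - 1) 1 + α.parts.erase m
      have h1 : Multiset.filter (fun x => 1 < x) β'.parts = α.parts.erase m := by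
        have : α.parts.erase m = (m ::ₘ Multiset.filter (fun x => 1 < x) β'.parts).erase m := by
          rw [← heq]
        rw [this]; simp
      have h2 : Multiset.filter (fun x => ¬ 1 < x) β'.parts =
          Multiset.replicate (m - 1) 1 := by
        have : Multiset.filter (fun x => ¬ 1 < x) β'.parts =
            Multiset.filter (fun x => x = 1) β'.parts := by
          apply Multiset.filter_congr
          intro x hx
          have := β'.parts_pos hx
          constructor <;> intro h <;> omega
        rw [this, Multiset.filter_eq', hc1]
      calc β'.parts = Multiset.filter (fun x => ¬ 1 < x) β'.parts
            + Multiset.filter (fun x => 1 < x) β'.parts := by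
              rw [add_comm, Multiset.filter_add_not]
        _ = Multiset.replicate (m - 1) 1 + α.parts.erase m := by rw [h1, h2]
  · intro α
    refine ⟨?_, ?_, ?_, ?_⟩
    · by_cases h1 : 1 ∈ α.parts
      · exact Or.inl h1
      · have hall : ∀ x ∈ α.parts, 2 ≤ x := by
          intro x hx
          have := α.parts_pos hx
          rcases Nat.lt_or_ge x 2 with h | h
          · exfalso; apply h1; have : x = 1 := by omega
            exact this ▸ hx
          · exact h
        by_cases hc : 2 ≤ Multiset.card α.parts
        · exact Or.inr (Or.inl ⟨hall, hc⟩)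
        · right; right
          have hne : α.parts ≠ 0 := by
            intro h
            have := α.parts_sum
            rw [h] at this
            simp at this
          have hc1 : Multiset.card α.parts = 1 := by
            have := Multiset.card_pos.2 hne
            omega
          obtain ⟨a, ha⟩ := Multiset.card_eq_one.1 hc1
          have : a = n + 1 := by
            have := α.parts_sum
            rw [ha] at this
            simpa using this
          rw [ha, this]
    · rintro ⟨h1, hall, -⟩
      have := hall 1 h1; omega
    · rintro ⟨h1, heq⟩
      rw [heq] at h1
      have : (1 : ℕ) = n + 1 := by simpa using h1
      omega
    · rintro ⟨⟨-, hc⟩, heq⟩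
      rw [heq] at hc
      simp at hc
end

section
/- For n ≥ 1, the number of partitions of n+1 with at least two parts and all parts ≥ 2 equals the number of partitions of n with at least one part equal to 1 and at least one part > 1 such that the number of unit parts is strictly less than the smallest part exceeding 1. -/
open Multiset

/-! The bijection takes the smallest part `m` of a partition of `n + 1` into parts `≥ 2` and
breaks it into `m - 1` ones, giving a partition of `n` whose `m - 1` ones are fewer than its
smallest non-unit part, the second smallest part `≥ m` of the original. Conversely, the `k` ones
of a partition of `n` are merged into one part `k + 1`, which is then the unique smallest part. -/

namespace Multiset

variable {s : Multiset ℕ} {m : ℕ}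

noncomputable def spreadMin (s : Multiset ℕ) : Multiset ℕ :=
  s.erase (sInf {x | x ∈ s}) + replicate (sInf {x | x ∈ s} - 1) 1

def gatherOnes (s : Multiset ℕ) : Multiset ℕ :=
  (s.count 1 + 1) ::ₘ s.filter (· ≠ 1)

lemma exists_isLeast_setOf_mem (hs : s ≠ 0) : ∃ m, IsLeast {x | x ∈ s} m := by
  obtain ⟨m, hm, hmin⟩ := s.exists_min_image id hs
  exact ⟨m, hm, hmin⟩

lemma spreadMin_eq (hm : IsLeast {x | x ∈ s} m) :
    spreadMin s = s.erase m + replicate (m - 1) 1 := by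
  rw [spreadMin, hm.csInf_eq]

lemma eq_one_or_mem_of_mem_spreadMin {x : ℕ} (hx : x ∈ spreadMin s) :
    x = 1 ∨ x ∈ s := by
  rcases mem_add.mp hx with h | h
  · exact .inr (mem_of_mem_erase h)
  · exact .inl (eq_of_mem_replicate h)

lemma sum_spreadMin (hm : IsLeast {x | x ∈ s} m) (hm0 : 0 < m) :
    (spreadMin s).sum + 1 = s.sum := by
  rw [spreadMin_eq hm, sum_add, sum_replicate, smul_eq_mul, mul_one, ← sum_erase hm.1]
  omega

lemma count_one_spreadMin (hm : IsLeast {x | x ∈ s} m) (h1 : 1 ∉ s) :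
    (spreadMin s).count 1 = m - 1 := by
  rw [spreadMin_eq hm, count_add, count_replicate_self,
    count_eq_zero_of_notMem fun h ↦ h1 (mem_of_mem_erase h), zero_add]

lemma filter_ne_one_spreadMin (hm : IsLeast {x | x ∈ s} m) (h1 : 1 ∉ s) :
    (spreadMin s).filter (· ≠ 1) = s.erase m := by
  rw [spreadMin_eq hm, filter_add, filter_eq_self.mpr, filter_eq_nil.mpr, add_zero]
  · intro x hx
    simp [eq_of_mem_replicate hx]
  · rintro x hx rfl
    exact h1 (mem_of_mem_erase hx)

lemma gatherOnes_spreadMin (hs : s ≠ 0) (h2 : ∀ x ∈ s, 2 ≤ x) :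
    gatherOnes (spreadMin s) = s := by
  obtain ⟨m, hm⟩ := exists_isLeast_setOf_mem hs
  have h1 : 1 ∉ s := fun h ↦ absurd (h2 1 h) (by decide)
  rw [gatherOnes, count_one_spreadMin hm h1, filter_ne_one_spreadMin hm h1,
    Nat.sub_add_cancel (one_le_two.trans (h2 m hm.1)), cons_erase hm.1]

lemma sum_gatherOnes (s : Multiset ℕ) : (gatherOnes s).sum = s.sum + 1 := by
  conv_rhs => rw [← filter_add_not (· ≠ 1) s]
  simp only [gatherOnes, sum_cons, sum_add, not_not, filter_eq', sum_replicate, smul_eq_mul,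
    mul_one]
  omega

lemma isLeast_gatherOnes (hs : ∀ x ∈ s, x ≠ 1 → s.count 1 < x) :
    IsLeast {x | x ∈ gatherOnes s} (s.count 1 + 1) := by
  refine ⟨mem_cons_self _ _, fun x hx ↦ ?_⟩
  rcases mem_cons.mp hx with rfl | hx
  · rfl
  · exact hs x (mem_of_mem_filter hx) (mem_filter.mp hx).2

lemma spreadMin_gatherOnes (hs : ∀ x ∈ s, x ≠ 1 → s.count 1 < x) :
    spreadMin (gatherOnes s) = s := by
  rw [spreadMin_eq (isLeast_gatherOnes hs), gatherOnes, erase_cons_head, Nat.add_sub_cancel,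
    ← filter_eq', add_comm, filter_add_not]

end Multiset

namespace Nat.Partition

variable {n : ℕ}

lemma parts_ne_zero (α : Nat.Partition (n + 1)) : α.parts ≠ 0 := fun h ↦ by
  simpa [h] using α.parts_sum

noncomputable def spreadMin (α : Nat.Partition (n + 1)) : Nat.Partition n where
  parts := α.parts.spreadMin
  parts_pos hx :=
    (eq_one_or_mem_of_mem_spreadMin hx).elim (fun h ↦ h ▸ Nat.one_pos) α.parts_pos
  parts_sum := by
    obtain ⟨m, hm⟩ := exists_isLeast_setOf_mem α.parts_ne_zero
    have := sum_spreadMin hm (α.parts_pos hm.1)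
    rw [α.parts_sum] at this
    omega

def gatherOnes (β : Nat.Partition n) : Nat.Partition (n + 1) where
  parts := β.parts.gatherOnes
  parts_pos hx := by
    rcases mem_cons.mp hx with rfl | hx
    · exact Nat.succ_pos _
    · exact β.parts_pos (mem_of_mem_filter hx)
  parts_sum := by rw [sum_gatherOnes, β.parts_sum]

lemma secondKind2_spreadMin {α : Nat.Partition (n + 1)} (hcard : 2 ≤ card α.parts)
    (h2 : ∀ x ∈ α.parts, 2 ≤ x) : SecondKind2 α.spreadMin := by
  obtain ⟨m, hm⟩ := exists_isLeast_setOf_mem α.parts_ne_zero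
  have herase : α.parts.erase m ≠ 0 := by
    rw [← Multiset.card_pos, card_erase_of_mem hm.1, Nat.pred_eq_sub_one]
    omega
  obtain ⟨m', hm'⟩ := exists_isLeast_setOf_mem herase
  have h1 : 1 ∉ α.parts := fun h ↦ absurd (h2 1 h) (by decide)
  have hcount : α.spreadMin.parts.count 1 = m - 1 := count_one_spreadMin hm h1
  have hmm' : m ≤ m' := hm.2 (mem_of_mem_erase hm'.1)
  have hm2 : 2 ≤ m := h2 m hm.1
  refine ⟨m', ?_, by omega, fun x hx hx1 ↦ ?_, by omega, by omega⟩
  · change m' ∈ α.parts.spreadMin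
    rw [spreadMin_eq hm]
    exact mem_add.mpr (.inl hm'.1)
  · change x ∈ α.parts.spreadMin at hx
    rw [spreadMin_eq hm] at hx
    rcases mem_add.mp hx with hx | hx
    · exact hm'.2 hx
    · exact absurd (eq_of_mem_replicate hx) hx1.ne'

lemma gatherOnes_spreadMin {α : Nat.Partition (n + 1)} (h2 : ∀ x ∈ α.parts, 2 ≤ x) :
    α.spreadMin.gatherOnes = α :=
  Nat.Partition.ext (Multiset.gatherOnes_spreadMin α.parts_ne_zero h2)

lemma spreadMin_gatherOnes {β : Nat.Partition n} (hβ : SecondKind2 β) :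
    β.gatherOnes.spreadMin = β := by
  obtain ⟨m, -, -, hmin, -, hcount⟩ := hβ
  refine Nat.Partition.ext (Multiset.spreadMin_gatherOnes fun x hx hx1 ↦ ?_)
  have := β.parts_pos hx
  exact hcount.trans_le (hmin x hx (by omega))

lemma two_le_card_gatherOnes {β : Nat.Partition n} (hβ : SecondKind2 β) :
    2 ≤ card β.gatherOnes.parts := by
  obtain ⟨m, hm, hm1, -⟩ := hβ
  have : 0 < card (β.parts.filter (· ≠ 1)) :=
    card_pos_iff_exists_mem.mpr ⟨m, mem_filter.mpr ⟨hm, hm1.ne'⟩⟩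
  change 2 ≤ card β.parts.gatherOnes
  rw [Multiset.gatherOnes, card_cons]
  omega

lemma two_le_of_mem_gatherOnes {β : Nat.Partition n} (hβ : SecondKind2 β) :
    ∀ x ∈ β.gatherOnes.parts, 2 ≤ x := by
  intro x hx
  obtain ⟨-, -, -, -, hcount, -⟩ := hβ
  rcases mem_cons.mp hx with rfl | hx
  · omega
  · have := β.parts_pos (mem_of_mem_filter hx)
    have := (mem_filter.mp hx).2
    omega

end Nat.Partition

theorem stmt15_general (n : ℕ) :
    Nat.card {α : Nat.Partition (n + 1) //
        2 ≤ Multiset.card α.parts ∧ ∀ x ∈ α.parts, 2 ≤ x} =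
      Nat.card {β : Nat.Partition n // SecondKind2 β} :=
  Nat.card_congr
    { toFun α := ⟨α.1.spreadMin, Nat.Partition.secondKind2_spreadMin α.2.1 α.2.2⟩
      invFun β := ⟨β.1.gatherOnes, Nat.Partition.two_le_card_gatherOnes β.2,
        Nat.Partition.two_le_of_mem_gatherOnes β.2⟩
      left_inv α := Subtype.ext (Nat.Partition.gatherOnes_spreadMin α.2.2)
      right_inv β := Subtype.ext (Nat.Partition.spreadMin_gatherOnes β.2) }

/-- For `n ≥ 1`, the number of partitions of `n+1` with at least two parts and all parts
at least 2 equals the number of Second-Kind (second method) partitions of `n`. -/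
theorem stmt15 (n : ℕ) (hn : 1 ≤ n) :
    Nat.card {α : Nat.Partition (n + 1) //
        2 ≤ Multiset.card α.parts ∧ ∀ x ∈ α.parts, 2 ≤ x} =
      Nat.card {β : Nat.Partition n // SecondKind2 β} :=
  stmt15_general n
end

section
/- The map that takes a Second-Kind partition of n (smallest part occurring exactly once, including one-part partitions) to the partition of n+1 obtained by incrementing its smallest part, composed with the bijection between partitions of n+1 with all parts ≥ 2 and Second-Kind partitions of n, is the identity; i.e., incrementing the smallest part of a Second-Kind partition of n yields a partition of n+1 all of whose parts are ≥ 2, and decrementing the smallest part of such a partition of n+1 recovers the original partition. -/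
open Multiset

/-- Incrementing the smallest part of a Second-Kind partition of `n` yields a partition
of `n+1` all of whose parts are at least 2, and decrementing the smallest part of that
partition of `n+1` recovers the original partition. -/
theorem stmt19 (n : ℕ) (p : Nat.Partition n) (hp : SecondKind p) (s : ℕ)
    (hs : IsSmallest s p) :
    ∃ α : Nat.Partition (n + 1),
      α.parts = (s + 1) ::ₘ p.parts.erase s ∧ (∀ x ∈ α.parts, 2 ≤ x) ∧
        ∀ t, IsSmallest t α → (t - 1) ::ₘ α.parts.erase t = p.parts := by

  obtain ⟨s', hs', hcount⟩ := hp
  have hss' : s = s' := le_antisymm (hs.2 s' hs'.1) (hs'.2 s hs.1)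
  subst hss'
  have hspos : 0 < s := p.parts_pos hs.1
  -- every element of the erased multiset is strictly greater than s
  have hgt : ∀ x ∈ p.parts.erase s, s < x := by
    intro x hx
    have hxm : x ∈ p.parts := Multiset.mem_of_mem_erase hx
    rcases lt_or_eq_of_le (hs.2 x hxm) with h | h
    · exact h
    · exfalso
      subst h
      have h0 : Multiset.count s (p.parts.erase s) = 0 := by
        rw [Multiset.count_erase_self]; omega
      exact (Multiset.count_eq_zero.mp h0) hx
  have hsum : (s ::ₘ p.parts.erase s).sum = n := by
    rw [Multiset.cons_erase hs.1]; exact p.parts_sum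
  simp only [Multiset.sum_cons] at hsum
  refine ⟨⟨(s + 1) ::ₘ p.parts.erase s, ?_, ?_⟩, rfl, ?_, ?_⟩
  · intro x hx
    rcases Multiset.mem_cons.1 hx with h | h
    · omega
    · exact p.parts_pos (Multiset.mem_of_mem_erase h)
  · simp only [Multiset.sum_cons]; omega
  · intro x hx
    rcases Multiset.mem_cons.1 hx with h | h
    · omega
    · exact lt_of_le_of_lt hspos (hgt x h)
  · intro t ht
    have ht1 : t ∈ (s + 1) ::ₘ p.parts.erase s := ht.1
    have hle : t ≤ s + 1 := ht.2 (s + 1) (Multiset.mem_cons_self _ _)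
    have hge : s + 1 ≤ t := by
      rcases Multiset.mem_cons.1 ht1 with h | h
      · omega
      · exact hgt t h
    have : t = s + 1 := le_antisymm hle hge
    subst this
    rw [Multiset.erase_cons_head]
    simp only [Nat.add_sub_cancel]
    exact Multiset.cons_erase hs.1
end
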